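/- arXiv:1001.1911 — 4 statements merged into one kernel-verified Lean document; each statement's English description precedes it below -/
import Mathlib

section
/- Let 0 < r ≤ 1 and let f be a smooth 2ℤ^d-periodic function ℝ^d → gl(n,ℂ) with finite Gevrey-2 norm ||f||_r. There exist constants C_d and D depending only on d such that for every N ≥ e²d²/r⁴ one has Σ_{m ∈ (1/2)ℤ^d, |m| > N} ||f̂(m)|| ≤ C_d ||f||_r N^D e^{−N^{1/4}}. -/
open scoped BigOperators
open MeasureTheory Matrix

noncomputable section

attribute [local instance] Matrix.linftyOpNormedAddCommGroup Matrix.linftyOpNormedSpace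

/-- Iterated partial derivative with multi-index `α`. -/
def mpd {d : ℕ} {E : Type*} [NormedAddCommGroup E] [NormedSpace ℝ E]
    (α : Fin d → ℕ) (f : (Fin d → ℝ) → E) : (Fin d → ℝ) → E :=
  (List.finRange d).foldr
    (fun i g =>
      (fun (h : (Fin d → ℝ) → E) (θ : Fin d → ℝ) => fderiv ℝ h θ (Pi.single i 1))^[α i] g) f

/-- The quantity whose supremum over `p = (α, θ)` is the Gevrey-2 norm `‖f‖_r`. -/
def gevreyQ {d : ℕ} {E : Type*} [NormedAddCommGroup E] [NormedSpace ℝ E]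
    (r : ℝ) (f : (Fin d → ℝ) → E) (p : (Fin d → ℕ) × (Fin d → ℝ)) : ℝ :=
  r ^ (2 * ∑ i, p.1 i) / ((∏ i, Nat.factorial (p.1 i) : ℕ) : ℝ) ^ 2 * ‖mpd p.1 f p.2‖

/-- `‖f‖_r ≤ M`. -/
def GevreyLe {d : ℕ} {E : Type*} [NormedAddCommGroup E] [NormedSpace ℝ E]
    (r : ℝ) (f : (Fin d → ℝ) → E) (M : ℝ) : Prop :=
  ∀ p, gevreyQ r f p ≤ M

/-- The Gevrey-2 norm of `f` is finite. -/
def GevreyFinite {d : ℕ} {E : Type*} [NormedAddCommGroup E] [NormedSpace ℝ E]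
    (r : ℝ) (f : (Fin d → ℝ) → E) : Prop :=
  BddAbove (Set.range (gevreyQ r f))

/-- The Gevrey-2 norm `‖f‖_r`. -/
def gevreyNorm {d : ℕ} {E : Type*} [NormedAddCommGroup E] [NormedSpace ℝ E]
    (r : ℝ) (f : (Fin d → ℝ) → E) : ℝ :=
  ⨆ p, gevreyQ r f p

/-- `ℤ^d`-periodicity (function on the torus `𝕋^d`). -/
def Per1 {d : ℕ} {E : Type*} (f : (Fin d → ℝ) → E) : Prop :=
  ∀ (θ : Fin d → ℝ) (k : Fin d → ℤ), f (θ + fun i => (k i : ℝ)) = f θ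

/-- `2ℤ^d`-periodicity (function on the double torus `2𝕋^d`). -/
def Per2 {d : ℕ} {E : Type*} (f : (Fin d → ℝ) → E) : Prop :=
  ∀ (θ : Fin d → ℝ) (k : Fin d → ℤ), f (θ + fun i => 2 * (k i : ℝ)) = f θ

/-- The character `e^{2πi⟨m/2,θ⟩}` attached to the half-integer vector `m/2`, `m ∈ ℤ^d`. -/
def eHalf {d : ℕ} (m : Fin d → ℤ) (θ : Fin d → ℝ) : ℂ :=
  Complex.exp ((2 * Real.pi * Complex.I) * ∑ i, ((m i : ℂ) / 2) * (θ i : ℂ))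

/-- `|m/2| = |m₁|/2 + ⋯ + |m_d|/2` for a half-integer vector `m/2`. -/
def hnorm {d : ℕ} (m : Fin d → ℤ) : ℝ := (∑ i, |(m i : ℝ)|) / 2

/-- Fourier coefficient `f̂(m/2) = 2^{-d}∫_{[0,2]^d} f(θ)e^{-2πi⟨m/2,θ⟩}dθ`. -/
def fourierC {d n : ℕ} (f : (Fin d → ℝ) → Matrix (Fin n) (Fin n) ℂ) (m : Fin d → ℤ) :
    Matrix (Fin n) (Fin n) ℂ :=
  ((2 : ℝ) ^ d)⁻¹ • ∫ θ in Set.Icc (0 : Fin d → ℝ) (fun _ => 2), eHalf (-m) θ • f θ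

/-- Truncation of `f` at order `N`: `f^N = Σ_{|m|≤N} f̂(m)e^{2πi⟨m,·⟩}`. -/
def truncN {d n : ℕ} (N : ℕ) (f : (Fin d → ℝ) → Matrix (Fin n) (Fin n) ℂ) :
    (Fin d → ℝ) → Matrix (Fin n) (Fin n) ℂ :=
  fun θ => ∑ m ∈ (Finset.Icc (fun _ => -(2 * (N : ℤ))) (fun _ => (2 * (N : ℤ)))).filter
      (fun m : Fin d → ℤ => hnorm m ≤ N),
    eHalf m θ • fourierC f m

/-- `ω` is Diophantine with constant `κ` and exponent `τ`. -/
def IsDioph {d : ℕ} (ω : Fin d → ℝ) (κ τ : ℝ) : Prop :=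
  ∀ m : Fin d → ℤ, m ≠ 0 → κ / (∑ i, |(m i : ℝ)|) ^ τ ≤ |∑ i, (m i : ℝ) * ω i|

/-- `A` has `DC^N_ω(κ',τ)` spectrum. -/
def DCspec {d n : ℕ} (ω : Fin d → ℝ) (N : ℕ) (κ' τ : ℝ)
    (A : Matrix (Fin n) (Fin n) ℂ) : Prop :=
  ∀ α ∈ spectrum ℂ A, ∀ β ∈ spectrum ℂ A, ∀ m : Fin d → ℤ, m ≠ 0 → hnorm m ≤ N →
    κ' / hnorm m ^ τ ≤
      ‖α - β - (2 * Real.pi * Complex.I) * ∑ i, ((m i : ℂ) / 2) * (ω i : ℂ)‖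

/-- The trivial map `Φ(θ) = Σ_L e^{2πi⟨m_L,θ⟩}P_L` attached to a decomposition. -/
def PhiTriv {d n s : ℕ} (P : Fin s → Matrix (Fin n) (Fin n) ℂ)
    (m : Fin s → Fin d → ℤ) (θ : Fin d → ℝ) : Matrix (Fin n) (Fin n) ℂ :=
  ∑ L, eHalf (m L) θ • P L

/-- `F` has good periodicity properties w.r.t. the decomposition `P` and the family `m`:
`Φ⁻¹FΦ` is `ℤ^d`-periodic. -/
def GoodPer {d n s : ℕ} (F : (Fin d → ℝ) → Matrix (Fin n) (Fin n) ℂ)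
    (P : Fin s → Matrix (Fin n) (Fin n) ℂ) (m : Fin s → Fin d → ℤ) : Prop :=
  Per1 (fun θ => PhiTriv P (fun L => -(m L)) θ * F θ * PhiTriv P m θ)

/-- Directional derivative `∂_ω f`. -/
def dOm {d : ℕ} {E : Type*} [NormedAddCommGroup E] [NormedSpace ℝ E]
    (ω : Fin d → ℝ) (f : (Fin d → ℝ) → E) (θ : Fin d → ℝ) : E :=
  fderiv ℝ f θ ω

variable {d : ℕ} {E : Type*} [NormedAddCommGroup E] [NormedSpace ℝ E]

/-- The `i`-th partial derivative operator. -/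
def Dop (i : Fin d) (h : (Fin d → ℝ) → E) (θ : Fin d → ℝ) : E :=
  fderiv ℝ h θ (Pi.single i 1)

lemma foldr_single (i : Fin d) (k : ℕ) (f : (Fin d → ℝ) → E) (l : List (Fin d)) (hnd : l.Nodup) :
    (l.foldr (fun j g =>
      (fun (h : (Fin d → ℝ) → E) (θ : Fin d → ℝ) => fderiv ℝ h θ (Pi.single j 1))^[(Pi.single i k : Fin d → ℕ) j] g) f)
      = if i ∈ l then (Dop i)^[k] f else f := by
  induction l with
  | nil => simp
  | cons j l ih =>
    rcases List.nodup_cons.1 hnd with ⟨hj, hnd'⟩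
    by_cases hij : j = i
    · subst hij
      simp only [List.foldr_cons, Pi.single_eq_same, ih hnd', if_neg hj, List.mem_cons, true_or,
        if_true]
      rfl
    · simp only [List.foldr_cons, Pi.single_eq_of_ne (Ne.symm (by exact fun h => hij h.symm) : j ≠ i), Function.iterate_zero, id_eq, ih hnd',
        List.mem_cons]
      have hij' : ¬ i = j := fun h => hij h.symm
      by_cases him : i ∈ l <;> simp [him, hij']

lemma mpd_single (i : Fin d) (k : ℕ) (f : (Fin d → ℝ) → E) :
    mpd (Pi.single i k) f = (Dop i)^[k] f := by
  rw [mpd, foldr_single i k f _ (List.nodup_finRange d), if_pos (List.mem_finRange i)]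
lemma Dop_contDiff (i : Fin d) {f : (Fin d → ℝ) → E} (hf : ContDiff ℝ (⊤ : ℕ∞) f) :
    ContDiff ℝ (⊤ : ℕ∞) (Dop i f) :=
  (ContinuousLinearMap.apply ℝ E ((Pi.single i 1 : Fin d → ℝ))).contDiff.comp
    (hf.fderiv_right (by simp))

lemma DopIter_contDiff (i : Fin d) (k : ℕ) {f : (Fin d → ℝ) → E} (hf : ContDiff ℝ (⊤ : ℕ∞) f) :
    ContDiff ℝ (⊤ : ℕ∞) ((Dop i)^[k] f) := by
  induction k with
  | zero => simpa using hf
  | succ k ih => rw [Function.iterate_succ_apply']; exact Dop_contDiff i ih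

lemma fderiv_per2 {f : (Fin d → ℝ) → E} (hf : ContDiff ℝ (⊤ : ℕ∞) f) (hp : Per2 f)
    (θ : Fin d → ℝ) (k : Fin d → ℤ) :
    fderiv ℝ f (θ + fun i => 2 * (k i : ℝ)) = fderiv ℝ f θ := by
  set c : Fin d → ℝ := fun i => 2 * (k i : ℝ)
  have h1 : HasFDerivAt f (fderiv ℝ f (θ + c)) (θ + c) :=
    (hf.differentiable (by simp) (θ + c)).hasFDerivAt
  have h2 : HasFDerivAt (fun x => f (x + c)) (fderiv ℝ f (θ + c)) θ := by
    have := h1.comp θ ((hasFDerivAt_id θ).add_const c)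
    exact this
  have he : (fun x => f (x + c)) = f := funext fun x => hp x k
  rw [he] at h2
  exact (h2.fderiv).symm

lemma Dop_per2 (i : Fin d) {f : (Fin d → ℝ) → E} (hf : ContDiff ℝ (⊤ : ℕ∞) f) (hp : Per2 f) :
    Per2 (Dop i f) := by
  intro θ k
  show fderiv ℝ f (θ + fun i => 2 * (k i : ℝ)) (Pi.single i 1) = fderiv ℝ f θ (Pi.single i 1)
  rw [fderiv_per2 hf hp θ k]

lemma DopIter_per2 (i : Fin d) (k : ℕ) {f : (Fin d → ℝ) → E} (hf : ContDiff ℝ (⊤ : ℕ∞) f)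
    (hp : Per2 f) : Per2 ((Dop i)^[k] f) := by
  induction k with
  | zero => simpa using hp
  | succ k ih =>
    rw [Function.iterate_succ_apply']
    exact Dop_per2 i (DopIter_contDiff i k hf) ih

lemma eHalf_per2 (m : Fin d → ℤ) (θ : Fin d → ℝ) (k : Fin d → ℤ) :
    eHalf m (θ + fun i => 2 * (k i : ℝ)) = eHalf m θ := by
  unfold eHalf
  have : ∑ i, ((m i : ℂ) / 2) * (((θ + fun j => 2 * (k j : ℝ)) i : ℝ) : ℂ)
      = (∑ i, ((m i : ℂ) / 2) * (θ i : ℂ)) + ∑ i, (m i : ℂ) * (k i : ℂ) := by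
    rw [← Finset.sum_add_distrib]
    congr 1; funext i
    push_cast [Pi.add_apply]
    ring
  rw [this, mul_add, Complex.exp_add]
  have : (2 * ↑Real.pi * Complex.I) * ∑ i, (m i : ℂ) * (k i : ℂ)
      = ((∑ i, m i * k i : ℤ) : ℂ) * (2 * ↑Real.pi * Complex.I) := by
    push_cast; ring
  rw [this, Complex.exp_int_mul_two_pi_mul_I, mul_one]
/-- The linear functional `θ ↦ 2πi Σ (m_j/2) θ_j`. -/
def charCLM (m : Fin d → ℤ) : (Fin d → ℝ) →L[ℝ] ℂ :=
  ∑ j, ((2 * (Real.pi : ℂ) * Complex.I) * ((m j : ℂ) / 2)) •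
    (Complex.ofRealCLM.comp (ContinuousLinearMap.proj j))

lemma charCLM_apply (m : Fin d → ℤ) (θ : Fin d → ℝ) :
    charCLM m θ = (2 * (Real.pi : ℂ) * Complex.I) * ∑ i, ((m i : ℂ) / 2) * (θ i : ℂ) := by
  simp only [charCLM, ContinuousLinearMap.sum_apply, ContinuousLinearMap.smul_apply,
    ContinuousLinearMap.comp_apply, ContinuousLinearMap.proj_apply, Complex.ofRealCLM_apply,
    smul_eq_mul, Finset.mul_sum]
  congr 1; funext i; ring

lemma eHalf_eq_exp_charCLM (m : Fin d → ℤ) :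
    eHalf m = fun θ => Complex.exp (charCLM m θ) := by
  funext θ; rw [eHalf, charCLM_apply]

lemma charCLM_single (m : Fin d → ℤ) (i : Fin d) :
    charCLM m (Pi.single i 1) = ((Real.pi : ℂ) * (m i : ℂ)) * Complex.I := by
  rw [charCLM_apply]
  have : ∀ j, ((m j : ℂ) / 2) * ((Pi.single i 1 : Fin d → ℝ) j : ℂ)
      = if j = i then (m i : ℂ) / 2 else 0 := by
    intro j
    by_cases h : j = i
    · subst h; simp
    · simp [Pi.single_eq_of_ne h, h]
  rw [Finset.sum_congr rfl fun j _ => this j, Finset.sum_ite_eq' Finset.univ i fun _ => (m i : ℂ) / 2]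
  simp; ring

lemma hasFDerivAt_eHalf (m : Fin d → ℤ) (θ : Fin d → ℝ) :
    HasFDerivAt (eHalf m) (eHalf m θ • charCLM m) θ := by
  rw [eHalf_eq_exp_charCLM]
  exact (Complex.hasDerivAt_exp _).comp_hasFDerivAt θ (charCLM m).hasFDerivAt

lemma continuous_eHalf (m : Fin d → ℤ) : Continuous (eHalf m) := by
  rw [eHalf_eq_exp_charCLM]
  exact Complex.continuous_exp.comp (charCLM m).continuous
section IBP

variable {E : Type*} [NormedAddCommGroup E] [NormedSpace ℝ E] [NormedSpace ℂ E]
  [IsScalarTower ℝ ℂ E] [CompleteSpace E]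

lemma insertNth_shift {n : ℕ} (i : Fin (n + 1)) (x : Fin n → ℝ) :
    Fin.insertNth i (2 : ℝ) x
      = Fin.insertNth i (0 : ℝ) x + fun j => 2 * (((Pi.single i 1 : Fin (n + 1) → ℤ) j : ℤ) : ℝ) := by
  funext j
  refine Fin.succAboveCases i ?_ ?_ j
  · simp
  · intro l
    simp [Pi.single_eq_of_ne (Fin.succAbove_ne i l)]

lemma ibp {d : ℕ} (hd : d ≠ 0) (i : Fin d) (m : Fin d → ℤ)
    {g : (Fin d → ℝ) → E} (hg : ContDiff ℝ (⊤ : ℕ∞) g) (hp : Per2 g) :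
    ∫ θ in Set.Icc (0 : Fin d → ℝ) (fun _ => 2), eHalf (-m) θ • Dop i g θ
      = (((Real.pi : ℂ) * (m i : ℂ)) * Complex.I) •
        ∫ θ in Set.Icc (0 : Fin d → ℝ) (fun _ => 2), eHalf (-m) θ • g θ := by
  obtain ⟨n, rfl⟩ := Nat.exists_eq_succ_of_ne_zero hd
  set χ : ℂ := ((Real.pi : ℂ) * (((-m) i : ℤ) : ℂ)) * Complex.I with hχ
  set F : (Fin (n + 1) → ℝ) → E := fun θ => eHalf (-m) θ • g θ with hF
  set F' : (Fin (n + 1) → ℝ) → (Fin (n + 1) → ℝ) →L[ℝ] E := fun θ =>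
    eHalf (-m) θ • fderiv ℝ g θ + (eHalf (-m) θ • charCLM (-m)).smulRight (g θ) with hF'
  have hFd : ∀ θ, HasFDerivAt F (F' θ) θ := fun θ =>
    (hasFDerivAt_eHalf (-m) θ).smul (hg.differentiable (by simp) θ).hasFDerivAt
  have hFeval : ∀ θ, F' θ (Pi.single i 1) = eHalf (-m) θ • Dop i g θ + χ • F θ := by
    intro θ
    simp only [hF', ContinuousLinearMap.add_apply, ContinuousLinearMap.smul_apply,
      ContinuousLinearMap.smulRight_apply, charCLM_single, smul_eq_mul, hF]
    rw [smul_smul]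
    congr 1
    rw [mul_comm]
  have hPF : Per2 F := by
    intro θ k
    simp only [hF]
    rw [eHalf_per2, hp]
  have hFc : Continuous F := (continuous_eHalf (-m)).smul (hg.continuous)
  have hGc : Continuous (fun θ => eHalf (-m) θ • Dop i g θ + χ • F θ) :=
    ((continuous_eHalf (-m)).smul (Dop_contDiff i hg).continuous).add (continuous_const.smul hFc)
  have hsum : ∀ x : Fin (n + 1) → ℝ,
      (∑ j, (if j = i then F' else 0) x (Pi.single j 1)) = eHalf (-m) x • Dop i g x + χ • F x := by
    intro x
    rw [Finset.sum_eq_single i]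
    · rw [if_pos rfl, hFeval]
    · intro j _ hj
      rw [if_neg hj]
      simp
    · intro h; exact absurd (Finset.mem_univ i) h
  have hab : (0 : Fin (n + 1) → ℝ) ≤ fun _ => 2 := fun j => by norm_num
  have hdiv := MeasureTheory.integral_divergence_of_hasFDerivAt_off_countable'
    (0 : Fin (n + 1) → ℝ) (fun _ => 2) hab
    (fun j => if j = i then F else 0) (fun j => if j = i then F' else 0)
    ∅ Set.countable_empty
    (by
      intro j
      by_cases h : j = i
      · rw [if_pos h]; exact hFc.continuousOn
      · rw [if_neg h]; exact continuousOn_const)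
    (by
      intro x _ j
      by_cases h : j = i
      · rw [if_pos h, if_pos h]; exact hFd x
      · rw [if_neg h, if_neg h]; exact hasFDerivAt_const (0 : E) x)
    (by
      rw [MeasureTheory.integrableOn_congr_fun (fun x _ => hsum x) measurableSet_Icc]
      exact hGc.continuousOn.integrableOn_compact isCompact_Icc)
  rw [MeasureTheory.setIntegral_congr_fun measurableSet_Icc (fun x _ => hsum x)] at hdiv
  have hfaces : ∑ j : Fin (n + 1),
      ((∫ x in Set.Icc ((0 : Fin (n+1) → ℝ) ∘ Fin.succAbove j) ((fun _ => (2:ℝ)) ∘ Fin.succAbove j),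
        (if j = i then F else 0) (Fin.insertNth j ((fun _ => (2:ℝ)) j) x)) -
       ∫ x in Set.Icc ((0 : Fin (n+1) → ℝ) ∘ Fin.succAbove j) ((fun _ => (2:ℝ)) ∘ Fin.succAbove j),
        (if j = i then F else 0) (Fin.insertNth j ((0 : Fin (n+1) → ℝ) j) x)) = 0 := by
    apply Finset.sum_eq_zero
    intro j _
    by_cases h : j = i
    · subst h
      rw [if_pos rfl, sub_eq_zero]
      apply MeasureTheory.integral_congr_ae
      filter_upwards with x
      show F (Fin.insertNth j (2:ℝ) x) = F (Fin.insertNth j (0:ℝ) x)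
      rw [insertNth_shift j x, hPF]
    · rw [if_neg h]
      simp
  rw [hfaces] at hdiv
  have hI1 : MeasureTheory.IntegrableOn (fun θ => eHalf (-m) θ • Dop i g θ)
      (Set.Icc (0 : Fin (n+1) → ℝ) (fun _ => 2)) :=
    (((continuous_eHalf (-m)).smul (Dop_contDiff i hg).continuous)).continuousOn.integrableOn_compact
      isCompact_Icc
  have hI2 : MeasureTheory.IntegrableOn F (Set.Icc (0 : Fin (n+1) → ℝ) (fun _ => 2)) :=
    hFc.continuousOn.integrableOn_compact isCompact_Icc
  have h1 := MeasureTheory.integral_add (μ := MeasureTheory.volume.restrict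
      (Set.Icc (0 : Fin (n+1) → ℝ) (fun _ => 2))) hI1 (hI2.smul χ)
  simp only [Pi.smul_apply, MeasureTheory.integral_smul] at h1
  rw [h1] at hdiv
  have hfin : (∫ θ in Set.Icc (0 : Fin (n+1) → ℝ) (fun _ => 2), eHalf (-m) θ • Dop i g θ)
      = (-χ) • ∫ θ in Set.Icc (0 : Fin (n+1) → ℝ) (fun _ => 2), F θ := by
    rw [neg_smul, eq_neg_iff_add_eq_zero]
    exact hdiv
  rw [hfin, hχ]
  congr 1
  simp only [Pi.neg_apply, Int.cast_neg]
  ring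
end IBP
section Fourier

lemma abs_eHalf {d : ℕ} (m : Fin d → ℤ) (θ : Fin d → ℝ) : ‖eHalf m θ‖ = 1 := by
  rw [eHalf]
  have : (2 * (Real.pi : ℂ) * Complex.I) * ∑ i, ((m i : ℂ) / 2) * (θ i : ℂ)
      = ((2 * Real.pi * ∑ i, ((m i : ℝ) / 2) * θ i : ℝ) : ℂ) * Complex.I := by
    push_cast
    ring
  rw [this, Complex.norm_exp_ofReal_mul_I]

variable {d n : ℕ}

lemma fourierC_Dop (hd : d ≠ 0) (i : Fin d) (m : Fin d → ℤ)
    {g : (Fin d → ℝ) → Matrix (Fin n) (Fin n) ℂ} (hg : ContDiff ℝ (⊤ : ℕ∞) g) (hp : Per2 g) :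
    fourierC (Dop i g) m = (((Real.pi : ℂ) * (m i : ℂ)) * Complex.I) • fourierC g m := by
  unfold fourierC
  rw [ibp hd i m hg hp, smul_comm]

lemma fourierC_DopIter (hd : d ≠ 0) (i : Fin d) (m : Fin d → ℤ) (k : ℕ)
    {g : (Fin d → ℝ) → Matrix (Fin n) (Fin n) ℂ} (hg : ContDiff ℝ (⊤ : ℕ∞) g) (hp : Per2 g) :
    fourierC ((Dop i)^[k] g) m = (((Real.pi : ℂ) * (m i : ℂ)) * Complex.I) ^ k • fourierC g m := by
  induction k with
  | zero => simp
  | succ k ih =>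
    rw [Function.iterate_succ_apply', fourierC_Dop hd i m (DopIter_contDiff i k hg)
      (DopIter_per2 i k hg hp), ih, smul_smul, pow_succ, mul_comm]

lemma norm_fourierC_le {g : (Fin d → ℝ) → Matrix (Fin n) (Fin n) ℂ} (hgc : Continuous g) (m : Fin d → ℤ)
    {B : ℝ} (hB : ∀ θ, ‖g θ‖ ≤ B) : ‖fourierC g m‖ ≤ B := by
  have hvol : (MeasureTheory.volume (Set.Icc (0 : Fin d → ℝ) (fun _ => 2))).toReal = 2 ^ d := by
    rw [Real.volume_Icc_pi_toReal (fun j => by norm_num : (0 : Fin d → ℝ) ≤ fun _ => 2)]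
    simp
  have hvlt : MeasureTheory.volume (Set.Icc (0 : Fin d → ℝ) (fun _ => 2)) < ⊤ :=
    (isCompact_Icc).measure_lt_top
  have hnorm : ∀ θ ∈ Set.Icc (0 : Fin d → ℝ) (fun _ => 2), ‖eHalf (-m) θ • g θ‖ ≤ B := by
    intro θ _
    rw [norm_smul]
    have : ‖eHalf (-m) θ‖ = 1 := abs_eHalf (-m) θ
    rw [this, one_mul]
    exact hB θ
  have hint : ‖∫ θ in Set.Icc (0 : Fin d → ℝ) (fun _ => 2), eHalf (-m) θ • g θ‖
      ≤ B * (MeasureTheory.volume (Set.Icc (0 : Fin d → ℝ) (fun _ => 2))).toReal :=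
    MeasureTheory.norm_setIntegral_le_of_norm_le_const hvlt hnorm
  rw [fourierC, norm_smul, hvol] at *
  calc ‖((2:ℝ)^d)⁻¹‖ * ‖∫ θ in Set.Icc (0 : Fin d → ℝ) (fun _ => 2), eHalf (-m) θ • g θ‖
      ≤ ‖((2:ℝ)^d)⁻¹‖ * (B * 2 ^ d) := by
        apply mul_le_mul_of_nonneg_left _ (norm_nonneg _)
        exact le_trans hint (by rw [hvol])
    _ = B := by
        rw [Real.norm_eq_abs, abs_inv, abs_pow, abs_two]
        field_simp
end Fourier

section Gevrey

variable {d : ℕ} {E : Type*} [NormedAddCommGroup E] [NormedSpace ℝ E]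

lemma gevreyNorm_nonneg {r : ℝ} {f : (Fin d → ℝ) → E} (hb : GevreyFinite r f) :
    0 ≤ gevreyNorm r f := by
  have h := le_ciSup hb ((0 : Fin d → ℕ), (0 : Fin d → ℝ))
  refine le_trans ?_ h
  rw [gevreyQ]
  simp only [Pi.zero_apply, Finset.sum_const_zero, mul_zero, pow_zero, Nat.factorial_zero,
    Finset.prod_const_one, Nat.cast_one, one_pow, div_one, one_mul]
  exact norm_nonneg _

lemma gevrey_deriv_bound {r : ℝ} (hr : 0 < r) {f : (Fin d → ℝ) → E} (hb : GevreyFinite r f)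
    (i : Fin d) (k : ℕ) (θ : Fin d → ℝ) :
    ‖(Dop i)^[k] f θ‖ ≤ gevreyNorm r f * (k.factorial : ℝ) ^ 2 / r ^ (2 * k) := by
  have h := le_ciSup hb ((Pi.single i k : Fin d → ℕ), θ)
  rw [gevreyQ] at h
  have hsum : ∑ j, (Pi.single i k : Fin d → ℕ) j = k := by
    rw [Finset.sum_pi_single' i k Finset.univ, if_pos (Finset.mem_univ i)]
  have hprod : (∏ j, Nat.factorial ((Pi.single i k : Fin d → ℕ) j)) = Nat.factorial k := by
    rw [Finset.prod_eq_single i (fun j _ hj => by rw [Pi.single_eq_of_ne hj]; rfl)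
      (fun h => absurd (Finset.mem_univ i) h), Pi.single_eq_same]
  rw [hsum, hprod, mpd_single] at h
  have hfac : (0:ℝ) < (k.factorial : ℝ) ^ 2 := by positivity
  have hrp : (0:ℝ) < r ^ (2 * k) := by positivity
  rw [div_mul_eq_mul_div, div_le_iff₀ hfac] at h
  calc ‖(Dop i)^[k] f θ‖ = (r ^ (2*k) * ‖(Dop i)^[k] f θ‖) / r ^ (2*k) := by field_simp
    _ ≤ (gevreyNorm r f * (k.factorial:ℝ)^2) / r ^ (2*k) := by
        exact (div_le_div_iff_of_pos_right hrp).mpr h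
    _ = gevreyNorm r f * (k.factorial : ℝ) ^ 2 / r ^ (2 * k) := by ring
end Gevrey
section PerM

variable {d n : ℕ}

lemma fourier_k_bound (hd : d ≠ 0) {r : ℝ} (hr : 0 < r)
    {f : (Fin d → ℝ) → Matrix (Fin n) (Fin n) ℂ} (hf : ContDiff ℝ (⊤ : ℕ∞) f) (hp : Per2 f)
    (hb : GevreyFinite r f) (m : Fin d → ℤ) (i : Fin d) (k : ℕ) :
    (Real.pi * |(m i : ℝ)|) ^ k * ‖fourierC f m‖
      ≤ gevreyNorm r f * (k.factorial : ℝ) ^ 2 / r ^ (2 * k) := by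
  have h1 := fourierC_DopIter hd i m k hf hp
  have h2 : ‖fourierC ((Dop i)^[k] f) m‖
      ≤ gevreyNorm r f * (k.factorial : ℝ) ^ 2 / r ^ (2 * k) :=
    norm_fourierC_le (DopIter_contDiff i k hf).continuous m
      (fun θ => gevrey_deriv_bound hr hb i k θ)
  rw [h1, norm_smul] at h2
  have habs : ‖(((Real.pi : ℂ) * (m i : ℂ)) * Complex.I) ^ k‖ = (Real.pi * |(m i : ℝ)|) ^ k := by
    rw [norm_pow]
    congr 1
    rw [norm_mul, norm_mul, Complex.norm_I, mul_one,
      Complex.norm_real, Complex.norm_intCast, Real.norm_eq_abs, abs_of_pos Real.pi_pos]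
  rwa [habs] at h2

/-- Optimization over `k`: `inf_k (k!)²/x^k ≤ e² e^{-(2/e)√x}`. -/
lemma opt_bound {x : ℝ} (hx : 0 < x) :
    ∃ k : ℕ, ((k.factorial : ℝ)) ^ 2 / x ^ k
      ≤ Real.exp 2 * Real.exp (-(2 / Real.exp 1) * Real.sqrt x) := by
  set s : ℝ := Real.sqrt x / Real.exp 1 with hs
  have hs0 : 0 ≤ s := div_nonneg (Real.sqrt_nonneg x) (Real.exp_pos 1).le
  refine ⟨⌊s⌋₊, ?_⟩
  have hk_le : (⌊s⌋₊ : ℝ) ≤ s := Nat.floor_le hs0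
  have hk_gt : s < ⌊s⌋₊ + 1 := Nat.lt_floor_add_one s
  set k := ⌊s⌋₊
  have h1 : ((k.factorial : ℝ)) ^ 2 / x ^ k ≤ (((k : ℝ) ^ 2) / x) ^ k := by
    have h0 : (k.factorial : ℝ) ≤ (k : ℝ) ^ k := by exact_mod_cast Nat.factorial_le_pow k
    have hnum : ((k.factorial : ℝ)) ^ 2 ≤ ((k:ℝ)^2)^k := by
      calc ((k.factorial : ℝ)) ^ 2 ≤ ((k:ℝ)^k) ^ 2 := pow_le_pow_left₀ (by positivity) h0 2
        _ = ((k:ℝ)^2)^k := by rw [← pow_mul, ← pow_mul, mul_comm k 2]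
    rw [div_pow]
    gcongr
  have h2 : ((k : ℝ) ^ 2) / x ≤ Real.exp (-2) := by
    have hkx : (k : ℝ) ^ 2 ≤ x / (Real.exp 1) ^ 2 := by
      have h' : (k : ℝ) ^ 2 ≤ s ^ 2 := pow_le_pow_left₀ (Nat.cast_nonneg k) hk_le 2
      refine h'.trans ?_
      rw [hs, div_pow, Real.sq_sqrt hx.le]
    have hee : (Real.exp 1) ^ 2 = Real.exp 2 := by
      rw [sq, ← Real.exp_add]; norm_num
    have he2 : Real.exp (-2) = 1 / (Real.exp 1) ^ 2 := by
      rw [Real.exp_neg, ← hee, one_div]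
    rw [he2, div_le_div_iff₀ hx (by positivity)]
    calc (k:ℝ)^2 * (Real.exp 1)^2 ≤ (x / (Real.exp 1)^2) * (Real.exp 1)^2 :=
          mul_le_mul_of_nonneg_right hkx (by positivity)
      _ = x := by field_simp
      _ = 1 * x := by ring
  have h3 : (((k : ℝ) ^ 2) / x) ^ k ≤ (Real.exp (-2)) ^ k :=
    pow_le_pow_left₀ (by positivity) h2 k
  have h4 : (Real.exp (-2)) ^ k = Real.exp ((-2) * k) := by
    rw [← Real.exp_nat_mul, mul_comm]
  have h5 : Real.exp ((-2) * k) ≤ Real.exp 2 * Real.exp (-(2 / Real.exp 1) * Real.sqrt x) := by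
    rw [← Real.exp_add]
    apply Real.exp_le_exp.mpr
    have hes : (2 / Real.exp 1) * Real.sqrt x = 2 * s := by
      rw [hs]; field_simp
    have : -(2 / Real.exp 1) * Real.sqrt x = -(2*s) := by rw [neg_mul, hes]
    rw [this]
    nlinarith [hk_gt]
  calc ((k.factorial : ℝ)) ^ 2 / x ^ k ≤ (((k : ℝ) ^ 2) / x) ^ k := h1
    _ ≤ (Real.exp (-2)) ^ k := h3
    _ = Real.exp ((-2) * k) := h4
    _ ≤ _ := h5

/-- Per-coefficient decay estimate. -/
lemma fourier_decay (hd : d ≠ 0) {r : ℝ} (hr : 0 < r)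
    {f : (Fin d → ℝ) → Matrix (Fin n) (Fin n) ℂ} (hf : ContDiff ℝ (⊤ : ℕ∞) f) (hp : Per2 f)
    (hb : GevreyFinite r f) {m : Fin d → ℤ} (hm : m ≠ 0) :
    ‖fourierC f m‖ ≤ gevreyNorm r f * Real.exp 2 *
      Real.exp (-(2 / Real.exp 1) * Real.sqrt (2 * Real.pi * r ^ 2 * hnorm m / d)) := by
  obtain ⟨i, -, hi⟩ := Finset.exists_max_image Finset.univ (fun j => |m j|)
    ⟨⟨0, Nat.pos_of_ne_zero hd⟩, Finset.mem_univ _⟩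
  have hd0 : (0:ℝ) < d := by exact_mod_cast Nat.pos_of_ne_zero hd
  have hmi1 : 1 ≤ |m i| := by
    rcases Function.ne_iff.mp hm with ⟨j, hj⟩
    have h1 : 1 ≤ |m j| := Int.one_le_abs (by simpa using hj)
    exact h1.trans (hi j (Finset.mem_univ j))
  have hmiR : (1 : ℝ) ≤ |(m i : ℝ)| := by
    rw [← Int.cast_abs]; exact_mod_cast hmi1
  set x : ℝ := r ^ 2 * (Real.pi * |(m i : ℝ)|) with hxdef
  have hx : 0 < x := by
    rw [hxdef]
    exact mul_pos (by positivity) (mul_pos Real.pi_pos (by linarith))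
  obtain ⟨k, hk⟩ := opt_bound hx
  have hkey := fourier_k_bound hd hr hf hp hb m i k
  have hpmi : 0 < (Real.pi * |(m i : ℝ)|) ^ k := by positivity
  have hM0 : 0 ≤ gevreyNorm r f := gevreyNorm_nonneg hb
  have hxk : x ^ k = r ^ (2*k) * (Real.pi * |(m i : ℝ)|) ^ k := by
    rw [hxdef, mul_pow, ← pow_mul]
  have hstep : ‖fourierC f m‖ ≤ gevreyNorm r f * ((k.factorial : ℝ) ^ 2 / x ^ k) := by
    have h' : ‖fourierC f m‖
        ≤ (gevreyNorm r f * (k.factorial : ℝ) ^ 2 / r ^ (2*k)) / (Real.pi * |(m i : ℝ)|) ^ k := by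
      rw [le_div_iff₀ hpmi, mul_comm]
      exact hkey
    refine h'.trans_eq ?_
    rw [div_div, hxk, mul_div_assoc]
  have hmono : Real.exp (-(2 / Real.exp 1) * Real.sqrt x)
      ≤ Real.exp (-(2 / Real.exp 1) * Real.sqrt (2 * Real.pi * r ^ 2 * hnorm m / d)) := by
    apply Real.exp_le_exp.mpr
    have hsle : Real.sqrt (2 * Real.pi * r ^ 2 * hnorm m / d) ≤ Real.sqrt x := by
      apply Real.sqrt_le_sqrt
      have hsum : (2:ℝ) * hnorm m ≤ d * |(m i : ℝ)| := by
        rw [hnorm]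
        have hterm : ∀ j, |(m j : ℝ)| ≤ |(m i : ℝ)| := by
          intro j
          rw [← Int.cast_abs, ← Int.cast_abs]
          exact_mod_cast hi j (Finset.mem_univ j)
        have : ∑ j, |(m j : ℝ)| ≤ ∑ _j : Fin d, |(m i : ℝ)| :=
          Finset.sum_le_sum fun j _ => hterm j
        rw [Finset.sum_const, Finset.card_univ, Fintype.card_fin, nsmul_eq_mul] at this
        linarith
      rw [div_le_iff₀ hd0]
      have hpi := Real.pi_pos
      have hr2 : (0:ℝ) < r ^ 2 := by positivity
      calc 2 * Real.pi * r ^ 2 * hnorm m = (Real.pi * r^2) * (2 * hnorm m) := by ring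
        _ ≤ (Real.pi * r^2) * (d * |(m i : ℝ)|) := by
            apply mul_le_mul_of_nonneg_left hsum (by positivity)
        _ = x * d := by rw [hxdef]; ring
    have hc : -(2 / Real.exp 1) ≤ 0 := by
      have := Real.exp_pos 1
      have : 0 ≤ 2 / Real.exp 1 := by positivity
      linarith
    exact mul_le_mul_of_nonpos_left hsle hc
  calc ‖fourierC f m‖ ≤ gevreyNorm r f * ((k.factorial : ℝ) ^ 2 / x ^ k) := hstep
    _ ≤ gevreyNorm r f * (Real.exp 2 * Real.exp (-(2 / Real.exp 1) * Real.sqrt x)) :=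
        mul_le_mul_of_nonneg_left hk hM0
    _ ≤ gevreyNorm r f * (Real.exp 2 *
          Real.exp (-(2 / Real.exp 1) * Real.sqrt (2 * Real.pi * r ^ 2 * hnorm m / d))) := by
        apply mul_le_mul_of_nonneg_left _ hM0
        exact mul_le_mul_of_nonneg_left hmono (Real.exp_pos 2).le
    _ = _ := by ring
end PerM
section Numeric

lemma nine_e_le_eight_pi : 9 * Real.exp 1 ≤ 8 * Real.pi := by
  have h1 := Real.exp_one_lt_d9
  have h2 := Real.pi_gt_d6
  nlinarith

variable {d n : ℕ}

/-- Final per-coefficient bound in product form, for `N` in the admissible range. -/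
lemma per_m_final (hd : d ≠ 0) {r N : ℝ} (hr0 : 0 < r) (hr1 : r ≤ 1)
    {f : (Fin d → ℝ) → Matrix (Fin n) (Fin n) ℂ} (hf : ContDiff ℝ (⊤ : ℕ∞) f) (hp : Per2 f)
    (hb : GevreyFinite r f) (hN : (Real.exp 1) ^ 2 * (d : ℝ) ^ 2 / r ^ 4 ≤ N)
    {m : Fin d → ℤ} (hm : N < hnorm m) :
    ‖fourierC f m‖ ≤ (gevreyNorm r f *
        (Real.exp 2 * (Nat.factorial (4 * d) : ℝ) * 25 ^ d / 2 ^ (4 * d)) *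
        N ^ d * Real.exp (-(N ^ ((1 : ℝ) / 4)))) *
      ∏ i, (((1 : ℝ) + |(m i : ℝ)|) ^ 2)⁻¹ := by
  have hd1 : (1 : ℝ) ≤ d := by exact_mod_cast Nat.one_le_iff_ne_zero.mpr hd
  have hd0 : (0 : ℝ) < d := by linarith
  have he0 : (0 : ℝ) < Real.exp 1 := Real.exp_pos 1
  have hN0 : 0 < N := lt_of_lt_of_le (by positivity) hN
  have hN7 : 7 ≤ N := by
    have he7 : (7 : ℝ) ≤ (Real.exp 1) ^ 2 := by
      have := Real.exp_one_gt_d9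
      nlinarith
    have hr4 : r ^ 4 ≤ 1 := pow_le_one₀ hr0.le hr1
    have hd2 : (1:ℝ) ≤ (d : ℝ) ^ 2 := by nlinarith
    have hrd : r ^ 4 ≤ (d : ℝ) ^ 2 := hr4.trans hd2
    have : (Real.exp 1) ^ 2 * (d : ℝ) ^ 2 / r ^ 4 ≥ (Real.exp 1) ^ 2 := by
      rw [ge_iff_le, le_div_iff₀ (by positivity)]
      nlinarith [mul_le_mul_of_nonneg_left hrd (by positivity : (0:ℝ) ≤ (Real.exp 1) ^ 2)]
    linarith
  set t : ℝ := hnorm m with htdef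
  have htN : N < t := hm
  have ht0 : 0 < t := lt_trans hN0 htN
  have ht7 : 7 ≤ t := le_of_lt (lt_of_le_of_lt hN7 htN)
  set Q : ℝ := N ^ ((1 : ℝ) / 4) with hQdef
  have hQ0 : 0 < Q := Real.rpow_pos_of_pos hN0 _
  have hQ2 : Q ^ 2 = Real.sqrt N := by
    rw [hQdef, ← Real.rpow_natCast (N ^ ((1:ℝ)/4)) 2, ← Real.rpow_mul hN0.le,
      Real.sqrt_eq_rpow]
    norm_num
  have hQ4 : Q ^ 4 = N := by
    have h : Q ^ 4 = (Q ^ 2) ^ 2 := by ring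
    rw [h, hQ2, Real.sq_sqrt hN0.le]
  have hsN0 : 0 < Real.sqrt N := Real.sqrt_pos.mpr hN0
  have hst0 : 0 < Real.sqrt t := Real.sqrt_pos.mpr ht0
  have hsNt : Real.sqrt N ≤ Real.sqrt t := Real.sqrt_le_sqrt htN.le
  have hM0 : 0 ≤ gevreyNorm r f := gevreyNorm_nonneg hb
  -- `e d ≤ r² √N`
  have hrN : Real.exp 1 * d ≤ r ^ 2 * Real.sqrt N := by
    have hsq : (Real.exp 1 * d) ^ 2 ≤ (r ^ 2 * Real.sqrt N) ^ 2 := by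
      rw [mul_pow, mul_pow, Real.sq_sqrt hN0.le]
      have := (div_le_iff₀ (by positivity : (0:ℝ) < r ^ 4)).mp hN
      nlinarith
    calc Real.exp 1 * d = Real.sqrt ((Real.exp 1 * d) ^ 2) :=
          (Real.sqrt_sq (by positivity)).symm
      _ ≤ Real.sqrt ((r ^ 2 * Real.sqrt N) ^ 2) := Real.sqrt_le_sqrt hsq
      _ = r ^ 2 * Real.sqrt N := Real.sqrt_sq (by positivity)
  -- step 2 : `3 √t / Q ≤ (2/e) √(2π r² t / d)`
  have hstep2 : 3 * Real.sqrt t / Q ≤ (2 / Real.exp 1) * Real.sqrt (2 * Real.pi * r ^ 2 * t / d) := by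
    have harg0 : (0:ℝ) ≤ 2 * Real.pi * r ^ 2 * t / d := by positivity
    have key : 9 * (Real.exp 1) ^ 2 * d ≤ 8 * Real.pi * (r ^ 2 * Real.sqrt N) := by
      have h8 := nine_e_le_eight_pi
      nlinarith [mul_le_mul h8 hrN (by positivity) (by positivity)]
    have hsq : (3 * Real.sqrt t / Q) ^ 2 ≤ ((2 / Real.exp 1) * Real.sqrt (2 * Real.pi * r ^ 2 * t / d)) ^ 2 := by
      have hL : (3 * Real.sqrt t / Q) ^ 2 = 9 * t / Real.sqrt N := by
        rw [div_pow, mul_pow, Real.sq_sqrt ht0.le, hQ2]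
        norm_num
      have hR : ((2 / Real.exp 1) * Real.sqrt (2 * Real.pi * r ^ 2 * t / d)) ^ 2
          = 4 * (2 * Real.pi * r ^ 2 * t / d) / (Real.exp 1) ^ 2 := by
        rw [mul_pow, Real.sq_sqrt harg0, div_pow]
        ring
      rw [hL, hR, div_le_div_iff₀ hsN0 (by positivity)]
      have hrw : 4 * (2 * Real.pi * r ^ 2 * t / d) * Real.sqrt N
          = (8 * Real.pi * r ^ 2 * t * Real.sqrt N) / d := by ring
      rw [hrw, le_div_iff₀ hd0]
      nlinarith [mul_le_mul_of_nonneg_right key ht0.le]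
    calc 3 * Real.sqrt t / Q = Real.sqrt ((3 * Real.sqrt t / Q) ^ 2) :=
          (Real.sqrt_sq (by positivity)).symm
      _ ≤ Real.sqrt (((2 / Real.exp 1) * Real.sqrt (2 * Real.pi * r ^ 2 * t / d)) ^ 2) :=
          Real.sqrt_le_sqrt hsq
      _ = _ := Real.sqrt_sq (by positivity)
  -- step 1 : `Q + 2√t/Q ≤ 3√t/Q`
  have hstep1 : Q + 2 * Real.sqrt t / Q ≤ 3 * Real.sqrt t / Q := by
    have hQle : Q ≤ Real.sqrt t / Q := by
      rw [le_div_iff₀ hQ0, ← sq, hQ2]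
      exact hsNt
    have h3 : 3 * Real.sqrt t / Q = Real.sqrt t / Q + 2 * Real.sqrt t / Q := by ring
    rw [h3]
    linarith
  -- decay estimate
  have hm0 : m ≠ 0 := by
    intro h0
    have hz : t = 0 := by rw [htdef, h0]; simp [hnorm]
    rw [hz] at htN
    linarith
  have hdecay := fourier_decay hd hr0 hf hp hb hm0
  -- exponent split
  have hsplit : Real.exp (-(2 / Real.exp 1) * Real.sqrt (2 * Real.pi * r ^ 2 * t / d))
      ≤ Real.exp (-Q) * Real.exp (-(2 * Real.sqrt t / Q)) := by
    rw [← Real.exp_add]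
    apply Real.exp_le_exp.mpr
    have hge : 0 ≤ Real.sqrt (2 * Real.pi * r ^ 2 * t / d) := Real.sqrt_nonneg _
    linarith [hstep1, hstep2]
  -- step 4 : tail of exp
  have hstep4 : Real.exp (-(2 * Real.sqrt t / Q))
      ≤ (Nat.factorial (4 * d) : ℝ) * N ^ d / (2 ^ (4 * d) * t ^ (2 * d)) := by
    set u : ℝ := 2 * Real.sqrt t / Q with hudef
    have hu0 : 0 < u := by positivity
    have h1 : (Real.sqrt t) ^ (4 * d) = t ^ (2 * d) := by
      rw [show 4 * d = 2 * (2 * d) by ring, pow_mul, Real.sq_sqrt ht0.le]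
    have h2 : Q ^ (4 * d) = N ^ d := by
      rw [pow_mul, hQ4]
    have hupow : u ^ (4 * d) = 2 ^ (4 * d) * t ^ (2 * d) / N ^ d := by
      rw [hudef, div_pow, mul_pow, h1, h2]
    have hple := Real.pow_div_factorial_le_exp (x := u) hu0.le (4 * d)
    have hufac : 0 < u ^ (4 * d) / (Nat.factorial (4 * d) : ℝ) := by positivity
    have hinv : Real.exp (-u) ≤ (Nat.factorial (4 * d) : ℝ) / u ^ (4 * d) := by
      rw [Real.exp_neg, inv_eq_one_div]
      calc 1 / Real.exp u ≤ 1 / (u ^ (4 * d) / (Nat.factorial (4 * d) : ℝ)) :=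
            one_div_le_one_div_of_le hufac hple
        _ = (Nat.factorial (4 * d) : ℝ) / u ^ (4 * d) := one_div_div _ _
    refine hinv.trans_eq ?_
    rw [hupow, div_div_eq_mul_div]
  -- step 5 : product comparison
  have hsum2 : ∑ j, |(m j : ℝ)| = 2 * t := by
    rw [htdef, hnorm]; ring
  have hfac5 : ∀ i, (1 : ℝ) + |(m i : ℝ)| ≤ 5 * t := by
    intro i
    have hle := Finset.single_le_sum (f := fun j => |(m j : ℝ)|)
      (fun j _ => abs_nonneg _) (Finset.mem_univ i)
    rw [hsum2] at hle
    linarith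
  have hX0 : 0 < ∏ i, ((1 : ℝ) + |(m i : ℝ)|) ^ 2 :=
    Finset.prod_pos fun i _ => by positivity
  have hXle : (∏ i, ((1 : ℝ) + |(m i : ℝ)|) ^ 2) ≤ 25 ^ d * t ^ (2 * d) := by
    calc (∏ i, ((1 : ℝ) + |(m i : ℝ)|) ^ 2) ≤ ∏ _i : Fin d, (5 * t) ^ 2 :=
          Finset.prod_le_prod (fun i _ => by positivity)
            (fun i _ => pow_le_pow_left₀ (by positivity) (hfac5 i) 2)
      _ = ((5 * t) ^ 2) ^ d := by
          rw [Finset.prod_const, Finset.card_univ, Fintype.card_fin]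
      _ = 25 ^ d * t ^ (2 * d) := by
          have h5 : ((5:ℝ) * t) ^ 2 = 25 * t ^ 2 := by ring
          rw [h5, mul_pow, ← pow_mul]
  have hstep5 : (t ^ (2 * d))⁻¹ ≤ 25 ^ d * ∏ i, (((1 : ℝ) + |(m i : ℝ)|) ^ 2)⁻¹ := by
    rw [Finset.prod_inv_distrib]
    have h1 : (t ^ (2*d))⁻¹ = 25 ^ d * (25 ^ d * t ^ (2*d))⁻¹ := by
      rw [mul_inv]
      rw [← mul_assoc, mul_inv_cancel₀ (by positivity : (25:ℝ) ^ d ≠ 0), one_mul]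
    rw [h1]
    apply mul_le_mul_of_nonneg_left _ (by positivity : (0:ℝ) ≤ (25:ℝ) ^ d)
    exact inv_anti₀ hX0 hXle
  -- final combination
  have hE2 : (0:ℝ) < Real.exp 2 := Real.exp_pos 2
  calc ‖fourierC f m‖
      ≤ gevreyNorm r f * Real.exp 2 *
          Real.exp (-(2 / Real.exp 1) * Real.sqrt (2 * Real.pi * r ^ 2 * t / d)) := hdecay
    _ ≤ gevreyNorm r f * Real.exp 2 * (Real.exp (-Q) * Real.exp (-(2 * Real.sqrt t / Q))) := by
        apply mul_le_mul_of_nonneg_left hsplit (by positivity)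
    _ ≤ gevreyNorm r f * Real.exp 2 *
          (Real.exp (-Q) * ((Nat.factorial (4 * d) : ℝ) * N ^ d / (2 ^ (4 * d) * t ^ (2 * d)))) := by
        apply mul_le_mul_of_nonneg_left _ (by positivity)
        exact mul_le_mul_of_nonneg_left hstep4 (Real.exp_pos _).le
    _ = (gevreyNorm r f * (Real.exp 2 * (Nat.factorial (4 * d) : ℝ) / 2 ^ (4 * d)) *
          N ^ d * Real.exp (-Q)) * (t ^ (2 * d))⁻¹ := by
        rw [div_eq_mul_inv, mul_inv]
        ring
    _ ≤ (gevreyNorm r f * (Real.exp 2 * (Nat.factorial (4 * d) : ℝ) / 2 ^ (4 * d)) *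
          N ^ d * Real.exp (-Q)) * (25 ^ d * ∏ i, (((1 : ℝ) + |(m i : ℝ)|) ^ 2)⁻¹) := by
        apply mul_le_mul_of_nonneg_left hstep5 (by positivity)
    _ = _ := by
        rw [hQdef]
        ring
end Numeric
section Summability

lemma summable_inv_one_add_sq_int :
    Summable (fun k : ℤ => (((1:ℝ) + |(k : ℝ)|) ^ 2)⁻¹) := by
  have base : Summable (fun n : ℕ => (((1:ℝ) + (n : ℝ)) ^ 2)⁻¹) := by
    have h := Real.summable_one_div_nat_pow.mpr (by norm_num : 1 < 2)
    have h1 := (_root_.summable_nat_add_iff (f := fun n : ℕ => 1 / (n : ℝ) ^ 2) 1).mpr h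
    apply h1.congr
    intro n
    push_cast
    rw [one_div]
    congr 2
    ring
  apply Summable.of_nat_of_neg
  · apply base.congr
    intro n
    norm_num
  · apply base.congr
    intro n
    push_cast
    rw [abs_neg, abs_of_nonneg (by positivity : (0:ℝ) ≤ (n:ℝ))]

lemma summable_G (d : ℕ) :
    Summable (fun m : Fin d → ℤ => ∏ i, (((1:ℝ) + |(m i : ℝ)|) ^ 2)⁻¹) := by
  induction d with
  | zero => exact Summable.of_finite
  | succ d ih =>
    have hprod := summable_inv_one_add_sq_int.mul_of_nonneg ih
      (fun _ => by positivity) (fun m => Finset.prod_nonneg fun i _ => by positivity)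
    have he := (Fin.consEquiv (fun _ : Fin (d + 1) => ℤ)).summable_iff
      (f := fun m : Fin (d + 1) → ℤ => ∏ i, (((1:ℝ) + |(m i : ℝ)|) ^ 2)⁻¹)
    apply he.mp
    apply hprod.congr
    intro p
    simp only [Function.comp_apply, Fin.consEquiv_apply, Fin.prod_univ_succ, Fin.cons_zero,
      Fin.cons_succ]

lemma one_le_tsum_G (d : ℕ) :
    1 ≤ ∑' m : Fin d → ℤ, ∏ i, (((1:ℝ) + |(m i : ℝ)|) ^ 2)⁻¹ := by
  have h := Summable.le_tsum (summable_G d) 0 (fun m _ => Finset.prod_nonneg fun i _ => by positivity)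
  simpa using h
end Summability
/-- tail estimate on Fourier coefficients of a Gevrey-2 function:
`Σ_{|m|>N} ‖f̂(m)‖ ≤ C_d ‖f‖_r N^D e^{-N^{1/4}}` for all `N ≥ e²d²/r⁴`, where `C_d, D`
depend only on `d`. -/
theorem stmt_2 (d : ℕ) :
    ∃ Cd D : ℝ, 0 < Cd ∧ 0 < D ∧
      ∀ (n : ℕ) (r : ℝ), 0 < r → r ≤ 1 →
      ∀ f : (Fin d → ℝ) → Matrix (Fin n) (Fin n) ℂ,
        ContDiff ℝ (⊤ : ℕ∞) f → Per2 f → GevreyFinite r f →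
        ∀ N : ℝ, (Real.exp 1) ^ 2 * (d : ℝ) ^ 2 / r ^ 4 ≤ N →
          Summable (fun m : {m : Fin d → ℤ // N < hnorm m} => ‖fourierC f m.1‖) ∧
          (∑' m : {m : Fin d → ℤ // N < hnorm m}, ‖fourierC f m.1‖) ≤
            Cd * gevreyNorm r f * N ^ D * Real.exp (-(N ^ ((1 : ℝ) / 4))) := by
  by_cases hd : d = 0
  · subst hd
    refine ⟨1, 1, one_pos, one_pos, ?_⟩
    intro n r hr0 hr1 f hf hp hb N hN
    have hz : (Real.exp 1) ^ 2 * ((0 : ℕ) : ℝ) ^ 2 / r ^ 4 = 0 := by norm_num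
    have hN0 : 0 ≤ N := by rw [hz] at hN; exact hN
    have hempty : IsEmpty {m : Fin 0 → ℤ // N < hnorm m} := by
      constructor
      rintro ⟨m, hm⟩
      have h0 : hnorm m = 0 := by simp [hnorm]
      rw [h0] at hm
      linarith
    constructor
    · exact Summable.of_finite
    · have htz : (∑' m : {m : Fin 0 → ℤ // N < hnorm m}, ‖fourierC f m.1‖) = 0 :=
        tsum_empty
      rw [htz]
      have hM0 : 0 ≤ gevreyNorm r f := gevreyNorm_nonneg hb
      have h1 : 0 ≤ N ^ (1 : ℝ) := Real.rpow_nonneg hN0 1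
      have h2 : (0:ℝ) ≤ Real.exp (-(N ^ ((1:ℝ)/4))) := (Real.exp_pos _).le
      calc (0:ℝ) ≤ (1 * gevreyNorm r f * N ^ (1:ℝ)) * Real.exp (-(N ^ ((1:ℝ)/4))) := by
            apply mul_nonneg _ h2
            apply mul_nonneg _ h1
            rw [one_mul]; exact hM0
        _ = 1 * gevreyNorm r f * N ^ (1:ℝ) * Real.exp (-(N ^ ((1:ℝ)/4))) := by ring
  · set S : ℝ := ∑' m : Fin d → ℤ, ∏ i, (((1:ℝ) + |(m i : ℝ)|) ^ 2)⁻¹ with hSdef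
    have hS1 : 1 ≤ S := one_le_tsum_G d
    have hc0 : (0:ℝ) < Real.exp 2 * (Nat.factorial (4 * d) : ℝ) * 25 ^ d / 2 ^ (4 * d) := by
      have := Nat.factorial_pos (4 * d)
      positivity
    refine ⟨Real.exp 2 * (Nat.factorial (4 * d) : ℝ) * 25 ^ d / 2 ^ (4 * d) * S, d,
      mul_pos hc0 (lt_of_lt_of_le one_pos hS1),
      by exact_mod_cast Nat.pos_of_ne_zero hd, ?_⟩
    intro n r hr0 hr1 f hf hp hb N hN
    have hd0 : (0:ℝ) < d := by exact_mod_cast Nat.pos_of_ne_zero hd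
    have hN0 : 0 < N := lt_of_lt_of_le (by positivity) hN
    have hM0 : 0 ≤ gevreyNorm r f := gevreyNorm_nonneg hb
    set K : ℝ := gevreyNorm r f *
        (Real.exp 2 * (Nat.factorial (4 * d) : ℝ) * 25 ^ d / 2 ^ (4 * d)) *
        N ^ d * Real.exp (-(N ^ ((1 : ℝ) / 4))) with hKdef
    have hK0 : 0 ≤ K := by
      rw [hKdef]
      have := Nat.factorial_pos (4 * d)
      positivity
    have hbound : ∀ m : {m : Fin d → ℤ // N < hnorm m},
        ‖fourierC f m.1‖ ≤ K * ∏ i, (((1:ℝ) + |(m.1 i : ℝ)|) ^ 2)⁻¹ := by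
      rintro ⟨m, hm⟩
      exact per_m_final hd hr0 hr1 hf hp hb hN hm
    have hsumK : Summable (fun m : {m : Fin d → ℤ // N < hnorm m} =>
        K * ∏ i, (((1:ℝ) + |(m.1 i : ℝ)|) ^ 2)⁻¹) :=
      (((summable_G d).subtype _)).mul_left K
    have hsum1 : Summable (fun m : {m : Fin d → ℤ // N < hnorm m} => ‖fourierC f m.1‖) :=
      Summable.of_nonneg_of_le (fun m => norm_nonneg _) hbound hsumK
    refine ⟨hsum1, ?_⟩
    calc (∑' m : {m : Fin d → ℤ // N < hnorm m}, ‖fourierC f m.1‖)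
        ≤ ∑' m : {m : Fin d → ℤ // N < hnorm m},
            K * ∏ i, (((1:ℝ) + |(m.1 i : ℝ)|) ^ 2)⁻¹ := Summable.tsum_le_tsum hbound hsum1 hsumK
      _ = K * ∑' m : {m : Fin d → ℤ // N < hnorm m},
            ∏ i, (((1:ℝ) + |(m.1 i : ℝ)|) ^ 2)⁻¹ := tsum_mul_left
      _ ≤ K * S := by
          apply mul_le_mul_of_nonneg_left _ hK0
          exact Summable.tsum_subtype_le (fun m : Fin d → ℤ => ∏ i, (((1:ℝ) + |(m i : ℝ)|) ^ 2)⁻¹)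
            {m : Fin d → ℤ | N < hnorm m}
            (fun m => Finset.prod_nonneg fun i _ => by positivity) (summable_G d)
      _ = Real.exp 2 * (Nat.factorial (4 * d) : ℝ) * 25 ^ d / 2 ^ (4 * d) * S *
            gevreyNorm r f * N ^ ((d : ℕ) : ℝ) * Real.exp (-(N ^ ((1 : ℝ) / 4))) := by
          rw [Real.rpow_natCast, hKdef]
          ring
end
end

section
/- Let ℒ be a real decomposition of ℂ^n (i.e. for every L ∈ ℒ, the complex-conjugate subspace L̄ also belongs to ℒ), let (m_L)_{L∈ℒ} ⊂ (1/2)ℤ^d, and let Ψ(θ) = Σ_{L∈ℒ} e^{2πi⟨m_L,θ⟩}P_L. Then Ψ(θ) has real entries for every θ ∈ ℝ^d if and only if m_L = −m_{L̄} for every L ∈ ℒ. Moreover, if Ψ is real-valued then det Ψ(θ) = 1 for all θ, i.e. Ψ takes values in SL(n,ℝ). -/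
open scoped BigOperators
open MeasureTheory Matrix

noncomputable section

attribute [local instance] Matrix.linftyOpNormedAddCommGroup Matrix.linftyOpNormedSpace

/-! Conjugating `Ψ` replaces each exponent `m_L` by `-m_{σ L}`, and the exponents can be read off
from `Ψ(θ) P_L = e^{2πi⟨m_L/2,θ⟩} P_L` (as `P_L ≠ 0`), so `Ψ` is real exactly when
`m_{σ L} = -m_L`. The function `D(θ) = det Ψ(θ)` is a character of `ℝ^d`, bounded because the
entries of `Ψ(θ)` are, so `|D| = 1`. If `Ψ` is real then so is `D`, and
`D(θ) = D(θ/2)^2 = (±1)^2 = 1`. -/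

theorem norm_eq_one_of_map_add_of_bounded {G 𝕜 : Type*} [AddGroup G] [NormedDivisionRing 𝕜]
    {f : G → 𝕜} (hf_add : ∀ x y, f (x + y) = f x * f y) (hf_zero : f 0 = 1) {C : ℝ}
    (hC : ∀ x, ‖f x‖ ≤ C) (x : G) : ‖f x‖ = 1 := by
  have hf_nsmul : ∀ (y : G) (k : ℕ), f (k • y) = f y ^ k := by
    intro y k
    induction k with
    | zero => simp [hf_zero]
    | succ k ih => rw [succ_nsmul, hf_add, ih, pow_succ]
  have hle : ∀ y, ‖f y‖ ≤ 1 := by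
    intro y
    by_contra! hy
    obtain ⟨k, hk⟩ := pow_unbounded_of_one_lt C hy
    have hbound := hC (k • y)
    rw [hf_nsmul, norm_pow] at hbound
    linarith
  have hinv : ‖f x‖ * ‖f (-x)‖ = 1 := by
    rw [← norm_mul, ← hf_add, add_neg_cancel, hf_zero, norm_one]
  nlinarith [hle x, hle (-x), norm_nonneg (f x), norm_nonneg (f (-x))]

theorem Complex.sq_eq_one_of_im_eq_zero_of_norm_eq_one {z : ℂ} (him : z.im = 0)
    (hnorm : ‖z‖ = 1) : z ^ 2 = 1 := by
  have hz : z = (z.re : ℂ) := Complex.ext rfl (by simp [him])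
  rw [hz, Complex.norm_real, Real.norm_eq_abs] at hnorm
  rw [hz, ← Complex.ofReal_pow, ← sq_abs, hnorm, one_pow, Complex.ofReal_one]

theorem Matrix.map_conj_eq_self_iff {ι : Type*} {A : Matrix ι ι ℂ} :
    A.map (starRingEnd ℂ) = A ↔ ∀ i j, (A i j).im = 0 := by
  simp only [← Matrix.ext_iff, Matrix.map_apply, Complex.conj_eq_iff_im]

section Characters

variable {d : ℕ}

theorem eHalf_eq_exp (m : Fin d → ℤ) (θ : Fin d → ℝ) :
    eHalf m θ = Complex.exp ((Real.pi * ∑ i, (m i : ℝ) * θ i : ℝ) * Complex.I) := by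
  rw [eHalf]
  congr 1
  push_cast
  rw [Finset.mul_sum, Finset.mul_sum, Finset.sum_mul]
  exact Finset.sum_congr rfl fun i _ => by ring

theorem norm_eHalf (m : Fin d → ℤ) (θ : Fin d → ℝ) : ‖eHalf m θ‖ = 1 := by
  rw [eHalf_eq_exp, Complex.norm_exp_ofReal_mul_I]

theorem eHalf_zero_right (m : Fin d → ℤ) : eHalf m 0 = 1 := by
  simp [eHalf_eq_exp]

theorem eHalf_add_right (m : Fin d → ℤ) (θ θ' : Fin d → ℝ) :
    eHalf m (θ + θ') = eHalf m θ * eHalf m θ' := by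
  simp only [eHalf_eq_exp, ← Complex.exp_add, Pi.add_apply, mul_add, Finset.sum_add_distrib]
  push_cast
  ring_nf

theorem eHalf_sub_left (m m' : Fin d → ℤ) (θ : Fin d → ℝ) :
    eHalf (m - m') θ = eHalf m θ / eHalf m' θ := by
  simp only [eHalf_eq_exp, ← Complex.exp_sub, Pi.sub_apply, Int.cast_sub, sub_mul,
    Finset.sum_sub_distrib]
  push_cast
  ring_nf

theorem conj_eHalf (m : Fin d → ℤ) (θ : Fin d → ℝ) :
    starRingEnd ℂ (eHalf m θ) = eHalf (-m) θ := by
  simp only [eHalf_eq_exp, ← Complex.exp_conj, map_mul, Complex.conj_ofReal, Complex.conj_I,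
    Pi.neg_apply, Int.cast_neg, neg_mul, Finset.sum_neg_distrib]
  push_cast
  ring_nf

theorem eq_zero_of_forall_eHalf_eq_one {k : Fin d → ℤ} (hk : ∀ θ, eHalf k θ = 1) : k = 0 := by
  funext j
  by_contra hkj
  have hkj' : (k j : ℝ) ≠ 0 := by exact_mod_cast hkj
  have h := hk (Pi.single j (k j : ℝ)⁻¹)
  rw [eHalf_eq_exp, Finset.sum_eq_single j (fun i _ hi => by simp [hi]) (by simp),
    Pi.single_eq_same, mul_inv_cancel₀ hkj', mul_one, Complex.exp_pi_mul_I] at h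
  norm_num at h

theorem eHalf_injective : Function.Injective (eHalf : (Fin d → ℤ) → (Fin d → ℝ) → ℂ) := by
  intro m m' h
  rw [← sub_eq_zero]
  refine eq_zero_of_forall_eHalf_eq_one fun θ => ?_
  rw [eHalf_sub_left, h, div_self (by simp [← norm_ne_zero_iff, norm_eHalf])]

end Characters

section TrivialMap

variable {d n s : ℕ} {P : Fin s → Matrix (Fin n) (Fin n) ℂ}

theorem PhiTriv_mul_proj (hidem : ∀ L, P L * P L = P L)
    (horth : ∀ L L', L ≠ L' → P L * P L' = 0) (m : Fin s → Fin d → ℤ) (θ : Fin d → ℝ)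
    (L : Fin s) : PhiTriv P m θ * P L = eHalf (m L) θ • P L := by
  rw [PhiTriv, Finset.sum_mul, Finset.sum_eq_single L (fun L' _ hL' => by
    rw [smul_mul_assoc, horth L' L hL', smul_zero]) (by simp), smul_mul_assoc, hidem]

theorem PhiTriv_add (hidem : ∀ L, P L * P L = P L)
    (horth : ∀ L L', L ≠ L' → P L * P L' = 0) (m : Fin s → Fin d → ℤ) (θ θ' : Fin d → ℝ) :
    PhiTriv P m (θ + θ') = PhiTriv P m θ * PhiTriv P m θ' := by
  rw [PhiTriv, PhiTriv.eq_1 P m θ', Finset.mul_sum]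
  refine Finset.sum_congr rfl fun L _ => ?_
  rw [mul_smul_comm, PhiTriv_mul_proj hidem horth, smul_smul, eHalf_add_right, mul_comm]

theorem PhiTriv_zero (hsum : ∑ L, P L = 1) (m : Fin s → Fin d → ℤ) :
    PhiTriv P m (0 : Fin d → ℝ) = 1 := by
  simp only [PhiTriv, eHalf_zero_right, one_smul, hsum]

theorem PhiTriv_injective (hidem : ∀ L, P L * P L = P L)
    (horth : ∀ L L', L ≠ L' → P L * P L' = 0) (hne : ∀ L, P L ≠ 0) :
    Function.Injective (PhiTriv (d := d) P) := by
  intro m m' h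
  funext L
  refine eHalf_injective (funext fun θ => smul_left_injective ℂ (hne L) ?_)
  simp only [← PhiTriv_mul_proj hidem horth, h]

theorem map_conj_PhiTriv {σ : Fin s → Fin s} (hσ : Function.Involutive σ)
    (hconj : ∀ L, P (σ L) = (P L).map (starRingEnd ℂ)) (m : Fin s → Fin d → ℤ)
    (θ : Fin d → ℝ) :
    (PhiTriv P m θ).map (starRingEnd ℂ) = PhiTriv P (fun L => -m (σ L)) θ := by
  ext i j
  simp only [PhiTriv, Matrix.map_apply, Matrix.sum_apply, Matrix.smul_apply, smul_eq_mul,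
    map_sum, map_mul, conj_eHalf]
  refine Fintype.sum_equiv (hσ.toPerm σ) _ _ fun L => ?_
  simp only [Function.Involutive.coe_toPerm, hσ L, hconj L, Matrix.map_apply]

theorem exists_bound_det_PhiTriv (m : Fin s → Fin d → ℤ) :
    ∃ C, ∀ θ, ‖(PhiTriv P m θ).det‖ ≤ C := by
  obtain ⟨C, hC⟩ := Finite.bddAbove_range fun ij : Fin n × Fin n => ∑ L, ‖P L ij.1 ij.2‖
  have hentry (θ : Fin d → ℝ) (i j : Fin n) : ‖PhiTriv P m θ i j‖ ≤ C := calc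
    ‖PhiTriv P m θ i j‖ ≤ ∑ L, ‖eHalf (m L) θ * P L i j‖ := by
      simpa [PhiTriv, Matrix.sum_apply] using
        norm_sum_le Finset.univ fun L => eHalf (m L) θ * P L i j
    _ = ∑ L, ‖P L i j‖ := by simp only [norm_mul, norm_eHalf, one_mul]
    _ ≤ C := hC ⟨(i, j), rfl⟩
  exact ⟨_, fun θ => Matrix.det_le (abv := NormedField.toAbsoluteValue ℂ) (hentry θ)⟩

end TrivialMap

/-- for a real decomposition of `ℂ^n` (conjugation acts on the subspaces via the
involution `σ`, so that `P_{L̄} = conj(P_L)`), the trivial map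
`Ψ(θ) = Σ_L e^{2πi⟨m_L,θ⟩}P_L` is real-valued iff `m_{L̄} = −m_L` for all `L`; and if it is
real-valued then it takes values in `SL(n,ℝ)`. -/
theorem stmt_5 (d n s : ℕ) (P : Fin s → Matrix (Fin n) (Fin n) ℂ)
    (hsum : ∑ L, P L = 1)
    (hidem : ∀ L, P L * P L = P L)
    (horth : ∀ L L', L ≠ L' → P L * P L' = 0)
    (hne : ∀ L, P L ≠ 0)
    (σ : Fin s → Fin s) (hσ : ∀ L, σ (σ L) = L)
    (hconj : ∀ L, P (σ L) = (P L).map (starRingEnd ℂ))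
    (m : Fin s → Fin d → ℤ) :
    ((∀ (θ : Fin d → ℝ) (i j : Fin n), (PhiTriv P m θ i j).im = 0) ↔
        ∀ L, m (σ L) = -(m L)) ∧
    ((∀ (θ : Fin d → ℝ) (i j : Fin n), (PhiTriv P m θ i j).im = 0) →
        ∀ θ : Fin d → ℝ, (PhiTriv P m θ).det = 1) := by
  have hreal : (∀ (θ : Fin d → ℝ) (i j : Fin n), (PhiTriv P m θ i j).im = 0) ↔
      PhiTriv P (fun L => -m (σ L)) = PhiTriv P m := by
    simp only [← Matrix.map_conj_eq_self_iff, ← map_conj_PhiTriv hσ hconj, funext_iff]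
  refine ⟨hreal.trans ⟨fun h L => ?_, fun h => by simp only [h, neg_neg]⟩, fun hre θ => ?_⟩
  · rw [← congrFun (PhiTriv_injective hidem horth hne h) (σ L), hσ]
  set D : (Fin d → ℝ) → ℂ := fun θ => (PhiTriv P m θ).det
  have hD_add (θ θ' : Fin d → ℝ) : D (θ + θ') = D θ * D θ' := by
    simp only [D, PhiTriv_add hidem horth, Matrix.det_mul]
  have hD_zero : D 0 = 1 := by simp only [D, PhiTriv_zero hsum, Matrix.det_one]
  obtain ⟨C, hC⟩ := exists_bound_det_PhiTriv (P := P) m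
  have hD_im (θ : Fin d → ℝ) : (D θ).im = 0 := by
    rw [← Complex.conj_eq_iff_im, RingHom.map_det, RingHom.mapMatrix_apply,
      Matrix.map_conj_eq_self_iff.2 (hre θ)]
  calc D θ = D ((2⁻¹ : ℝ) • θ) ^ 2 := by
        rw [sq, ← hD_add, ← add_smul]; norm_num
    _ = 1 := Complex.sq_eq_one_of_im_eq_zero_of_norm_eq_one (hD_im _)
        (norm_eq_one_of_map_add_of_bounded hD_add hD_zero hC _)
end
end

section
/- Let ω ∈ ℝ^d be Diophantine with constant κ and exponent τ. Let κ' ∈ (0,1), C > 0, F̃ ∈ gl(n,ℂ), ε̃ = ||F̃||, Ñ ∈ ℕ, and let Ã ∈ gl(n,ℂ) have DC^Ñ_ω(κ',τ) spectrum. There exists a constant c depending only on n and τ such that if ε̃ ≤ c(C^τ κ'/(1+||Ã||))^{2n} and Ñ ≤ |log ε̃|⁴/C, then Ã + F̃ has DC^Ñ_ω(3κ'/4, τ) spectrum. -/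
/-!
For `‖F̃‖ ≤ 1`, every eigenvalue `μ` of `Ã + F̃` has an eigenvalue `α` of `Ã` with
`|μ - α|ⁿ ≤ n! (2(1 + ‖Ã‖))ⁿ ‖F̃‖`: a kernel vector `v` of `μ - Ã - F̃` gives
`det(μ - Ã) • v = adj(μ - Ã) (F̃ v)`, while `|det(μ - Ã)| = ∏ |μ - αᵢ|` over the eigenvalues `αᵢ`
of `Ã`. Moving `α` and `β` by at most `δ` moves `α - β - 2πi⟨m, ω⟩` by at most `2δ`, so the
Diophantine bound survives with a loss of `κ'/4` once `2δ Ñ^τ ≤ κ'/4`. As `Ñ ≤ |log ε̃|⁴/C`, this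
reduces to `ε̃ |log ε̃|^{4τn} ≲ (C^τ κ'/(1 + ‖Ã‖))ⁿ`, which follows from the smallness of `ε̃`
because `ε |log ε|^b` is bounded on `(0, 1]`; for `ε > 1` instead `|log ε|^b = o(ε)`, so the
smallness condition also forces `ε̃ ≤ 1`.
-/

open scoped BigOperators
open MeasureTheory Matrix

noncomputable section

attribute [local instance] Matrix.linftyOpNormedAddCommGroup Matrix.linftyOpNormedSpace

open Polynomial Real
open scoped Nat

namespace Matrix

variable {m n : Type*} [Fintype m] [Fintype n]

theorem norm_apply_le_linfty_opNorm [DecidableEq n] (A : Matrix m n ℂ) (i : m) (j : n) :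
    ‖A i j‖ ≤ ‖A‖ :=
  calc ‖A i j‖ ≤ ‖A *ᵥ Pi.single j 1‖ := by
        rw [mulVec_single_one]; exact norm_le_pi_norm (A.col j) i
    _ ≤ ‖A‖ * ‖(Pi.single j 1 : n → ℂ)‖ := linfty_opNorm_mulVec A _
    _ = ‖A‖ := by rw [Pi.norm_single, norm_one, mul_one]

theorem linfty_opNorm_le_of_norm_apply_le (A : Matrix m n ℂ) {r : ℝ} (hr : 0 ≤ r)
    (h : ∀ i j, ‖A i j‖ ≤ r) : ‖A‖ ≤ Fintype.card n * r := by
  lift r to NNReal using hr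
  rw [linfty_opNorm_def, ← NNReal.coe_natCast, ← NNReal.coe_mul, NNReal.coe_le_coe]
  refine Finset.sup_le fun i _ => ?_
  calc ∑ j, ‖A i j‖₊ ≤ ∑ _j : n, r := Finset.sum_le_sum fun j _ => h i j
    _ = Fintype.card n * r := by simp

theorem norm_det_le_of_norm_apply_le (A : Matrix n n ℂ) [DecidableEq n] {r : ℝ}
    (h : ∀ i j, ‖A i j‖ ≤ r) : ‖A.det‖ ≤ (Fintype.card n)! * r ^ Fintype.card n := by
  simpa using Matrix.det_le (A := A) (abv := IsAbsoluteValue.toAbsoluteValue (norm : ℂ → ℝ)) h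

theorem norm_adjugate_le {k : ℕ} (X : Matrix (Fin (k + 1)) (Fin (k + 1)) ℂ) :
    ‖adjugate X‖ ≤ (k + 1)! * ‖X‖ ^ k := by
  have hentry : ∀ i j, ‖adjugate X i j‖ ≤ k ! * ‖X‖ ^ k := fun i j => by
    rw [adjugate_fin_succ_eq_det_submatrix, norm_mul, norm_pow, norm_neg, norm_one, one_pow,
      one_mul]
    simpa using norm_det_le_of_norm_apply_le (X.submatrix j.succAbove i.succAbove)
      fun a b => norm_apply_le_linfty_opNorm X _ _
  calc ‖adjugate X‖ ≤ Fintype.card (Fin (k + 1)) * (k ! * ‖X‖ ^ k) :=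
        linfty_opNorm_le_of_norm_apply_le _ (by positivity) hentry
    _ = (k + 1)! * ‖X‖ ^ k := by push_cast [Fintype.card_fin, Nat.factorial_succ]; ring

theorem norm_det_le_of_det_sub_eq_zero {n : ℕ} {X F : Matrix (Fin n) (Fin n) ℂ}
    (h : (X - F).det = 0) : ‖X.det‖ ≤ n ! * ‖X‖ ^ (n - 1) * ‖F‖ := by
  obtain ⟨v, hv0, hv⟩ := exists_mulVec_eq_zero_iff.2 h
  cases n with
  | zero => exact absurd (Subsingleton.elim v 0) hv0
  | succ k =>
    have hXv : X *ᵥ v = F *ᵥ v := by rwa [sub_mulVec, sub_eq_zero] at hv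
    have hdet : X.det • v = adjugate X *ᵥ (F *ᵥ v) := by
      rw [← hXv, mulVec_mulVec, adjugate_mul, smul_mulVec, one_mulVec]
    have hv : 0 < ‖v‖ := norm_pos_iff.2 hv0
    have : ‖X.det‖ * ‖v‖ ≤ (k + 1)! * ‖X‖ ^ k * ‖F‖ * ‖v‖ :=
      calc ‖X.det‖ * ‖v‖ = ‖adjugate X *ᵥ (F *ᵥ v)‖ := by rw [← hdet, norm_smul]
        _ ≤ ‖adjugate X‖ * (‖F‖ * ‖v‖) :=
          (linfty_opNorm_mulVec _ _).trans (by gcongr; exact linfty_opNorm_mulVec _ _)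
        _ ≤ (k + 1)! * ‖X‖ ^ k * (‖F‖ * ‖v‖) := by gcongr; exact norm_adjugate_le X
        _ = _ := by ring
    simpa using le_of_mul_le_mul_right this hv

theorem exists_mem_spectrum_nnnorm_sub_pow_le {ι : Type*} [Fintype ι] [DecidableEq ι]
    [Nonempty ι] (A : Matrix ι ι ℂ) (μ : ℂ) :
    ∃ α ∈ spectrum ℂ A, ‖μ - α‖₊ ^ Fintype.card ι ≤ ‖(scalar ι μ - A).det‖₊ := by
  have hsplit : A.charpoly.Splits := IsAlgClosed.splits _
  have hcard : Multiset.card A.charpoly.roots = Fintype.card ι := by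
    rw [splits_iff_card_roots.1 hsplit, charpoly_natDegree_eq_dim]
  obtain ⟨α, hα, hmin⟩ := A.charpoly.roots.toFinset.exists_min_image (‖μ - ·‖₊)
    (Multiset.toFinset_nonempty.2 (Multiset.card_pos.1 (hcard ▸ Fintype.card_pos)))
  rw [Multiset.mem_toFinset] at hα
  refine ⟨α, mem_spectrum_iff_isRoot_charpoly.2 (isRoot_of_mem_roots hα), ?_⟩
  rw [← eval_charpoly, hsplit.eval_eq_prod_roots_of_monic (charpoly_monic A), ← hcard,
    ← Multiset.card_map (‖μ - ·‖₊)]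
  calc ‖μ - α‖₊ ^ Multiset.card (A.charpoly.roots.map (‖μ - ·‖₊))
      ≤ (A.charpoly.roots.map (‖μ - ·‖₊)).prod := Multiset.pow_card_le_prod fun x hx => by
        obtain ⟨r, hr, rfl⟩ := Multiset.mem_map.1 hx
        exact hmin r (Multiset.mem_toFinset.2 hr)
    _ = ‖(A.charpoly.roots.map (μ - ·)).prod‖₊ := by
        simp [← nnnormHom_apply, map_multiset_prod, Multiset.map_map]

theorem ne_zero_of_mem_spectrum {n : ℕ} {A : Matrix (Fin n) (Fin n) ℂ} {μ : ℂ}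
    (hμ : μ ∈ spectrum ℂ A) : n ≠ 0 := by
  rintro rfl
  simp [spectrum.of_subsingleton] at hμ

theorem exists_mem_spectrum_norm_sub_pow_le_of_mem_spectrum_add {n : ℕ}
    (A F : Matrix (Fin n) (Fin n) ℂ) {μ : ℂ} (hμ : μ ∈ spectrum ℂ (A + F)) :
    ∃ α ∈ spectrum ℂ A, ‖μ - α‖ ^ n ≤ n ! * (2 * ‖A‖ + ‖F‖) ^ (n - 1) * ‖F‖ := by
  have : NeZero n := ⟨ne_zero_of_mem_spectrum hμ⟩
  have hμA : ‖μ‖ ≤ ‖A‖ + ‖F‖ := by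
    let _ := Matrix.linftyOpNormedRing (n := Fin n) (α := ℂ)
    let _ := Matrix.linftyOpNormedAlgebra (R := ℂ) (n := Fin n) (α := ℂ)
    exact (spectrum.norm_le_norm_of_mem hμ).trans (norm_add_le A F)
  have hX : ‖scalar (Fin n) μ - A‖ ≤ 2 * ‖A‖ + ‖F‖ := by
    have := norm_sub_le (diagonal fun _ => μ) A
    rw [linfty_opNorm_diagonal, pi_norm_const] at this
    rw [scalar_apply]
    linarith
  have hdet : (scalar (Fin n) μ - A - F).det = 0 := by
    rw [sub_sub, ← eval_charpoly]
    exact mem_spectrum_iff_isRoot_charpoly.1 hμ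
  obtain ⟨α, hα, hle⟩ := exists_mem_spectrum_nnnorm_sub_pow_le A μ
  refine ⟨α, hα, ?_⟩
  rw [Fintype.card_fin, ← NNReal.coe_le_coe, NNReal.coe_pow, coe_nnnorm, coe_nnnorm] at hle
  calc ‖μ - α‖ ^ n ≤ ‖(scalar (Fin n) μ - A).det‖ := hle
    _ ≤ n ! * ‖scalar (Fin n) μ - A‖ ^ (n - 1) * ‖F‖ := norm_det_le_of_det_sub_eq_zero hdet
    _ ≤ n ! * (2 * ‖A‖ + ‖F‖) ^ (n - 1) * ‖F‖ := by gcongr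

theorem exists_mem_spectrum_norm_sub_le_of_mem_spectrum_add {n : ℕ}
    (A F : Matrix (Fin n) (Fin n) ℂ) (hF : ‖F‖ ≤ 1) {δ : ℝ} (hδ0 : 0 ≤ δ)
    (hδ : n ! * (2 * (1 + ‖A‖)) ^ n * ‖F‖ ≤ δ ^ n) {μ : ℂ} (hμ : μ ∈ spectrum ℂ (A + F)) :
    ∃ α ∈ spectrum ℂ A, ‖μ - α‖ ≤ δ := by
  obtain ⟨α, hα, hle⟩ := exists_mem_spectrum_norm_sub_pow_le_of_mem_spectrum_add A F hμ
  refine ⟨α, hα, le_of_pow_le_pow_left₀ (ne_zero_of_mem_spectrum hμ) hδ0 (hle.trans ?_)⟩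
  refine le_trans ?_ hδ
  have hA : 1 ≤ 2 * (1 + ‖A‖) := by linarith [norm_nonneg A]
  gcongr
  calc (2 * ‖A‖ + ‖F‖) ^ (n - 1) ≤ (2 * (1 + ‖A‖)) ^ (n - 1) := by gcongr; linarith
    _ ≤ (2 * (1 + ‖A‖)) ^ n := pow_le_pow_right₀ hA (Nat.sub_le n 1)

end Matrix

namespace Real

theorem abs_log_rpow_le_of_one_le {b x : ℝ} (hb : 0 ≤ b) (hx : 1 ≤ x) :
    |log x| ^ b ≤ (b + 1) ^ b * x ^ (b / (b + 1)) := by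
  have hb1 : 0 < b + 1 := by linarith
  have hlog : |log x| ≤ (b + 1) * x ^ (1 / (b + 1)) := by
    rw [abs_of_nonneg (log_nonneg hx)]
    simpa [div_div_eq_mul_div, mul_comm] using log_le_rpow_div (by linarith) (one_div_pos.2 hb1)
  calc |log x| ^ b ≤ ((b + 1) * x ^ (1 / (b + 1))) ^ b := by gcongr
    _ = (b + 1) ^ b * x ^ (b / (b + 1)) := by
      rw [mul_rpow hb1.le (by positivity), ← rpow_mul (by linarith)]
      ring_nf

theorem mul_abs_log_rpow_le {b ε : ℝ} (hb : 0 ≤ b) (hε0 : 0 < ε) (hε1 : ε ≤ 1) :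
    ε * |log ε| ^ b ≤ (b + 1) ^ b := by
  have hb1 : 0 < b + 1 := by linarith
  have h := abs_log_rpow_le_of_one_le hb (one_le_inv₀ hε0 |>.2 hε1)
  rw [log_inv, abs_neg, inv_rpow hε0.le] at h
  calc ε * |log ε| ^ b ≤ ε * ((b + 1) ^ b * (ε ^ (b / (b + 1)))⁻¹) := by gcongr
    _ = (b + 1) ^ b * ε ^ (1 - b / (b + 1)) := by
      rw [rpow_sub hε0, rpow_one]; ring
    _ ≤ (b + 1) ^ b := by
      refine mul_le_of_le_one_right (by positivity) (rpow_le_one hε0.le hε1 ?_)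
      rw [sub_nonneg, div_le_one hb1]; linarith

theorem le_one_of_le_mul_abs_log_rpow {b c ε : ℝ} (hb : 0 ≤ b) (hc0 : 0 ≤ c)
    (hc : c * (b + 1) ^ b ≤ 1) (hε : ε ≤ c * |log ε| ^ b) : ε ≤ 1 := by
  by_contra! hε1
  have hb1 : 0 < b + 1 := by linarith
  have hlt : ε ^ (b / (b + 1)) < ε := by
    conv_rhs => rw [← rpow_one ε]
    exact rpow_lt_rpow_of_exponent_lt hε1 ((div_lt_one hb1).2 (by linarith))
  have := abs_log_rpow_le_of_one_le hb hε1.le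
  nlinarith [rpow_nonneg (zero_le_one.trans hε1.le) (b / (b + 1))]

theorem mul_mul_abs_log_rpow_half_le {b c K ε x : ℝ} (hb : 0 ≤ b)
    (hc : K ^ 2 * c * (b + 1) ^ b ≤ 1) (hε0 : 0 < ε) (hε1 : ε ≤ 1) (hx : 0 ≤ x)
    (hε : ε ≤ c * x ^ 2) : K * ε * |log ε| ^ (b / 2) ≤ x := by
  refine le_of_pow_le_pow_left₀ two_ne_zero hx ?_
  have hsq : (|log ε| ^ (b / 2)) ^ 2 = |log ε| ^ b := by
    rw [← rpow_mul_natCast (abs_nonneg _)]; norm_num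
  calc (K * ε * |log ε| ^ (b / 2)) ^ 2 = K ^ 2 * ε * (ε * |log ε| ^ b) := by
        rw [mul_pow, mul_pow, hsq]; ring
    _ ≤ K ^ 2 * (c * x ^ 2) * (b + 1) ^ b :=
        mul_le_mul (mul_le_mul_of_nonneg_left hε (sq_nonneg K)) (mul_abs_log_rpow_le hb hε0 hε1)
          (by positivity) (mul_nonneg (sq_nonneg K) (hε0.le.trans hε))
    _ ≤ x ^ 2 := by nlinarith [sq_nonneg x]

end Real

theorem hnorm_pos {d : ℕ} {m : Fin d → ℤ} (hm : m ≠ 0) : 0 < hnorm m := by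
  obtain ⟨i, hi⟩ := Function.ne_iff.1 hm
  have hi : 0 < |(m i : ℝ)| := abs_pos.2 (Int.cast_ne_zero.2 hi)
  have := Finset.single_le_sum (fun j _ => abs_nonneg (m j : ℝ)) (Finset.mem_univ i)
  unfold hnorm
  linarith

namespace DCspec

variable {d n : ℕ} {ω : Fin d → ℝ} {N : ℕ} {κ' κ'' τ : ℝ}

theorem zero {A : Matrix (Fin n) (Fin n) ℂ} : DCspec ω 0 κ' τ A :=
  fun _ _ _ _ _ hm hmN => absurd hmN (by simpa using hnorm_pos hm)

theorem of_near {δ : ℝ} {A B : Matrix (Fin n) (Fin n) ℂ} (hA : DCspec ω N κ' τ A) (hτ : 0 ≤ τ)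
    (hδ : 2 * δ * N ^ τ ≤ κ' - κ'')
    (hB : ∀ μ ∈ spectrum ℂ B, ∃ α ∈ spectrum ℂ A, ‖μ - α‖ ≤ δ) : DCspec ω N κ'' τ B := by
  intro μ hμ ν hν m hm hmN
  obtain ⟨α, hα, hμα⟩ := hB μ hμ
  obtain ⟨β, hβ, hνβ⟩ := hB ν hν
  set w : ℂ := 2 * π * Complex.I * ∑ i, (m i : ℂ) / 2 * (ω i : ℂ)
  have hh := rpow_pos_of_pos (hnorm_pos hm) τ
  have hδm : 2 * δ * hnorm m ^ τ ≤ κ' - κ'' := by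
    have hδ0 : 0 ≤ δ := (norm_nonneg _).trans hμα
    refine le_trans ?_ hδ
    gcongr
    exact (hnorm_pos hm).le
  have htri : ‖α - β - w‖ ≤ ‖μ - ν - w‖ + ‖μ - α‖ + ‖ν - β‖ :=
    calc ‖α - β - w‖ = ‖(μ - ν - w) - (μ - α) + (ν - β)‖ := by ring_nf
      _ ≤ _ := (norm_add_le _ _).trans (by gcongr; exact norm_sub_le _ _)
  have hκ : κ'' / hnorm m ^ τ + 2 * δ ≤ κ' / hnorm m ^ τ := by
    rw [div_add' _ _ _ hh.ne', div_le_div_iff_of_pos_right hh]; linarith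
  linarith [hA α hα β hβ m hm hmN]

end DCspec

theorem le_one_and_factorial_mul_le_of_le_mul_pow {n : ℕ} {τ a ε κ' C c : ℝ} (hτ : 0 ≤ τ)
    (ha : 0 ≤ a) (hκ'0 : 0 < κ') (hκ'1 : κ' ≤ 1) (hC : 0 < C) (hε0 : 0 < ε)
    (hCL : C ≤ |log ε| ^ 4)
    (hc : ((n ! * 16 ^ n) ^ 2 + 1) * c * (8 * τ * n + 1) ^ (8 * τ * n) ≤ 1)
    (hε : ε ≤ c * (C ^ τ * κ' / (1 + a)) ^ (2 * n)) :
    ε ≤ 1 ∧ n ! * (2 * (1 + a)) ^ n * ε ≤ (κ' * C ^ τ / (8 * (|log ε| ^ 4) ^ τ)) ^ n := by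
  set L := |log ε|
  set b : ℝ := 8 * τ * n with hb_def
  set K : ℝ := n ! * 16 ^ n
  set x := (C ^ τ * κ' / (1 + a)) ^ n
  have hb : 0 ≤ b := by positivity
  have hc0 : 0 ≤ c := by
    have : 0 ≤ c * (C ^ τ * κ' / (1 + a)) ^ (2 * n) := hε0.le.trans hε
    exact nonneg_of_mul_nonneg_left this (by positivity)
  have hL : 0 < L :=
    lt_of_pow_lt_pow_left₀ 4 (abs_nonneg _) (by rw [zero_pow four_ne_zero]; linarith)
  have hℓ : (L ^ 4) ^ τ = L ^ (4 * τ) := by rw [← rpow_natCast, ← rpow_mul hL.le]; norm_num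
  have hxℓ : x ≤ (L ^ (4 * τ)) ^ n := by
    refine pow_le_pow_left₀ (by positivity) ?_ n
    calc C ^ τ * κ' / (1 + a) ≤ C ^ τ := by
          rw [div_le_iff₀ (by positivity)]; nlinarith [rpow_pos_of_pos hC τ]
      _ ≤ L ^ (4 * τ) := hℓ ▸ rpow_le_rpow hC.le hCL hτ
  have hLb : L ^ b = ((L ^ (4 * τ)) ^ n) ^ 2 := by
    rw [← pow_mul, ← rpow_mul_natCast hL.le, hb_def]; push_cast; ring_nf
  have hεx : ε ≤ c * x ^ 2 := by rwa [← pow_mul, mul_comm n 2]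
  have hε1 : ε ≤ 1 := le_one_of_le_mul_abs_log_rpow hb hc0 (by nlinarith [sq_nonneg K])
    (hεx.trans (by rw [hLb]; gcongr))
  have hKε := mul_mul_abs_log_rpow_half_le (K := K) hb (by nlinarith) hε0 hε1 (by positivity) hεx
  refine ⟨hε1, ?_⟩
  rw [hℓ, div_pow, mul_pow 8, le_div_iff₀ (by positivity)]
  calc n ! * (2 * (1 + a)) ^ n * ε * (8 ^ n * (L ^ (4 * τ)) ^ n)
      = K * ε * L ^ (b / 2) * (1 + a) ^ n := by
        rw [show b / 2 = 4 * τ * n by rw [hb_def]; ring, rpow_mul_natCast hL.le, mul_pow 2 (1 + a)]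
        simp only [K, show (16 : ℝ) ^ n = 2 ^ n * 8 ^ n by rw [← mul_pow]; norm_num]
        ring
    _ ≤ x * (1 + a) ^ n := by gcongr
    _ = (κ' * C ^ τ) ^ n := by
        simp only [x, div_pow]; field_simp

/-- stability of the Diophantine-spectrum condition under perturbation: there is
`c = c(n,τ) > 0` such that if `Ã` has `DC^Ñ_ω(κ',τ)` spectrum,
`ε̃ = ‖F̃‖ ≤ c(C^τκ'/(1+‖Ã‖))^{2n}` and `Ñ ≤ |log ε̃|⁴/C`, then `Ã + F̃` has
`DC^Ñ_ω(3κ'/4,τ)` spectrum. -/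
theorem stmt_10 (n d : ℕ) (τ : ℝ) (hτ : max 1 ((d : ℝ) - 1) < τ) :
    ∃ c : ℝ, 0 < c ∧
    ∀ (κ : ℝ) (ω : Fin d → ℝ), 0 < κ → κ < 1 → (∀ i, |ω i| ≤ 1) → IsDioph ω κ τ →
    ∀ (κ' C : ℝ) (Ft At : Matrix (Fin n) (Fin n) ℂ) (Nt : ℕ),
      0 < κ' → κ' < 1 → 0 < C →
      DCspec ω Nt κ' τ At →
      ‖Ft‖ ≤ c * (C ^ τ * κ' / (1 + ‖At‖)) ^ (2 * n) →
      (Nt : ℝ) ≤ |Real.log ‖Ft‖| ^ 4 / C →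
      DCspec ω Nt (3 * κ' / 4) τ (At + Ft) := by
  have hτ0 : 0 < τ := by linarith [le_max_left 1 ((d : ℝ) - 1)]
  refine ⟨1 / (((n ! * 16 ^ n) ^ 2 + 1) * (8 * τ * n + 1) ^ (8 * τ * n)), by positivity, ?_⟩
  intro κ ω _ _ _ _ κ' C Ft At Nt hκ'0 hκ'1 hC hA hF hNt
  rcases Nat.eq_zero_or_pos Nt with rfl | hNt0
  · exact DCspec.zero
  have hCL : C ≤ |log ‖Ft‖| ^ 4 := by
    rw [le_div_iff₀ hC] at hNt
    nlinarith [(Nat.one_le_cast (α := ℝ)).2 hNt0]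
  have hε0 : 0 < ‖Ft‖ := norm_pos_iff.2 fun h => by simp [h] at hCL; linarith
  obtain ⟨hε1, hpert⟩ := le_one_and_factorial_mul_le_of_le_mul_pow hτ0.le (norm_nonneg At)
    hκ'0 hκ'1.le hC hε0 hCL (by field_simp; rfl) hF
  refine hA.of_near hτ0.le (δ := κ' * C ^ τ / (8 * (|log ‖Ft‖| ^ 4) ^ τ)) ?_ fun μ hμ =>
    exists_mem_spectrum_norm_sub_le_of_mem_spectrum_add At Ft hε1 (by positivity) hpert hμ
  have hℓ : 0 < (|log ‖Ft‖| ^ 4) ^ τ := rpow_pos_of_pos (hC.trans_le hCL) τ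
  have hNτ : (Nt : ℝ) ^ τ ≤ (|log ‖Ft‖| ^ 4) ^ τ / C ^ τ := by
    rw [← div_rpow (by positivity) hC.le]; gcongr
  calc 2 * (κ' * C ^ τ / (8 * (|log ‖Ft‖| ^ 4) ^ τ)) * Nt ^ τ
      ≤ 2 * (κ' * C ^ τ / (8 * (|log ‖Ft‖| ^ 4) ^ τ)) * ((|log ‖Ft‖| ^ 4) ^ τ / C ^ τ) := by
        gcongr
    _ = κ' - 3 * κ' / 4 := by
        field_simp
        ring
end
end

section
/- Let C' ≤ 1, b₀ > 0, τ ≥ 1, and D₂, γ₀ ∈ ℕ. There exists C depending only on C', D₂, γ₀, τ such that for every ε₀ ≤ C(1/(b₀+1))^{16γ₀D₂}, defining for k ≥ 1: ε_k = ε₀^{(5/2)^k}, γ_k = 2^k γ₀, r_k = 1/|log ε_{k−1}|², b_k = b_{k−1} + |log ε_{k−1}|⁴/C', and κ_k = C'/|log ε_k|^{4τ}, one has for every k: (i) 4/r_k ≤ |log ε_k|², and (ii) ((b_k+1)/(κ_k r_{k+1}))^{D₂γ_k} ε_k ≤ C'. -/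
open scoped BigOperators
open MeasureTheory Matrix

noncomputable section

attribute [local instance] Matrix.linftyOpNormedAddCommGroup Matrix.linftyOpNormedSpace

/-!
Write `L = |log ε₀|`, so that `|log ε_k| = (5/2)^k L` and `ε_k = exp (-(5/2)^k L)`. Since
`b_k` grows only polynomially in `|log ε_k|`, the logarithm of the base of the power in (ii) is
`O(1 + log |log ε_k|) = O(1 + k + log L)`, and the exponent is `O(2^k)`. As `2 < 5/2`, the whole
power is `exp (O((5/2)^k (1 + log L)))`, which `exp (-(5/2)^k L / 2)` absorbs once `L` is large;
the smallness of `ε₀` is exactly a lower bound on `L`.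
-/

open Real Filter Asymptotics

lemma nat_mul_two_pow_le (k : ℕ) : (k : ℝ) * 2 ^ k ≤ 4 * (5 / 2) ^ k := by
  have h := one_add_mul_le_pow (show (-2 : ℝ) ≤ 1 / 4 by norm_num) k
  calc (k : ℝ) * 2 ^ k ≤ 4 * (1 + 1 / 4) ^ k * 2 ^ k := by gcongr; linarith
    _ = 4 * (5 / 2) ^ k := by rw [mul_assoc, ← mul_pow]; norm_num

lemma two_pow_mul_add_mul_log_le {A a q L : ℝ} (hA : 0 ≤ A) (ha : 0 ≤ a) (hq : 0 ≤ q)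
    (hL : 1 ≤ L) (h : A * (a + q * (6 + log L)) ≤ L) (k : ℕ) :
    A * 2 ^ k * (a + q * log ((5 / 2) ^ k * L)) ≤ (5 / 2) ^ k * L := by
  have hlog : log ((5 / 2) ^ k * L) ≤ 3 / 2 * k + log L := by
    rw [log_mul (by positivity) (by positivity), log_pow]
    have := log_le_sub_one_of_pos (show (0 : ℝ) < 5 / 2 by norm_num)
    nlinarith [(Nat.cast_nonneg k : (0 : ℝ) ≤ k)]
  have h2 : (2 : ℝ) ^ k ≤ (5 / 2) ^ k := pow_le_pow_left₀ (by norm_num) (by norm_num) k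
  have hlogL : 0 ≤ log L := log_nonneg hL
  calc A * 2 ^ k * (a + q * log ((5 / 2) ^ k * L))
      ≤ A * 2 ^ k * (a + q * (3 / 2 * k + log L)) := by gcongr
    _ = A * (2 ^ k * (a + q * log L) + 3 / 2 * q * (k * 2 ^ k)) := by ring
    _ ≤ A * ((5 / 2) ^ k * (a + q * log L) + 3 / 2 * q * (4 * (5 / 2) ^ k)) := by
      gcongr A * (?_ + _ * ?_)
      · exact mul_le_mul_of_nonneg_right h2 (by positivity)
      · exact nat_mul_two_pow_le k
    _ = (5 / 2) ^ k * (A * (a + q * (6 + log L))) := by ring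
    _ ≤ (5 / 2) ^ k * L := by gcongr

lemma eventually_add_mul_log_le (a c : ℝ) : ∀ᶠ L in atTop, a + c * log L ≤ L := by
  have h : (fun L => a + c * log L) =o[atTop] id :=
    (isLittleO_const_id_atTop a).add (isLittleO_log_id_atTop.const_mul_left c)
  filter_upwards [h.bound one_pos, eventually_ge_atTop 0] with L hL hL0
  rw [norm_eq_abs, id, norm_of_nonneg hL0, one_mul] at hL
  exact (le_abs_self _).trans hL

lemma le_add_nat_mul_of_monotone {b u : ℕ → ℝ} (hu : Monotone u)
    (hb : ∀ k, b (k + 1) = b k + u k) (k : ℕ) : b k ≤ b 0 + k * u k := by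
  induction k with
  | zero => simp
  | succ k ih =>
    have : (k + 1 : ℝ) * u k ≤ (k + 1) * u (k + 1) := by gcongr; exact hu k.le_succ
    rw [hb k]; push_cast; linarith

lemma log_div_rpow_le {β c m s x : ℝ} (hc : 0 < c) (hm : 0 < m) (hx : 0 < x) (hβ : 0 < β)
    (hβm : β ≤ m * x ^ 5 / c) :
    log (β / (c / x ^ s * (1 / x ^ 2))) ≤ log m - 2 * log c + (s + 7) * log x := by
  have hlogβ : log β ≤ log m + 5 * log x - log c := by
    calc log β ≤ log (m * x ^ 5 / c) := log_le_log hβ hβm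
      _ = log m + 5 * log x - log c := by
        rw [log_div (by positivity) hc.ne', log_mul hm.ne' (by positivity), log_pow]
        push_cast; ring
  rw [log_div hβ.ne' (by positivity), log_mul (by positivity) (by positivity),
    log_div hc.ne' (by positivity), one_div, log_inv, log_rpow hx, log_pow]
  push_cast
  linarith

lemma pow_mul_exp_neg_le {M c x : ℝ} {n : ℕ} (hM : 0 < M) (hc : 0 < c)
    (h : n * log M - x ≤ log c) : M ^ n * exp (-x) ≤ c := by
  rw [← exp_log (pow_pos hM n), ← exp_add, ← exp_log hc, log_pow]
  exact exp_le_exp.2 (by linarith)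

lemma add_one_le_of_eq_add_geom {C' b₀ L : ℝ} {b : ℕ → ℝ} (hC'0 : 0 < C') (hC' : C' ≤ 1)
    (hb₀ : 0 ≤ b₀) (hL : 1 ≤ L) (hb0 : b 0 = b₀)
    (hb : ∀ k, b (k + 1) = b k + ((5 / 2) ^ k * L) ^ 4 / C') (k : ℕ) :
    b k + 1 ≤ 2 * (b₀ + 1) * ((5 / 2) ^ k * L) ^ 5 / C' := by
  set x := (5 / 2 : ℝ) ^ k * L
  have hx : 1 ≤ x := one_le_mul_of_one_le_of_one_le (one_le_pow₀ (by norm_num)) hL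
  have hkx : (k : ℝ) ≤ x := calc
    (k : ℝ) ≤ 2 ^ k := mod_cast Nat.lt_two_pow_self.le
    _ ≤ (5 / 2) ^ k := pow_le_pow_left₀ (by norm_num) (by norm_num) k
    _ ≤ x := le_mul_of_one_le_right (by positivity) hL
  have hu : Monotone fun j => ((5 / 2 : ℝ) ^ j * L) ^ 4 / C' := fun i j hij => by
    dsimp only
    gcongr
    norm_num
  have hbk : b k ≤ b₀ + k * (x ^ 4 / C') := hb0 ▸ le_add_nat_mul_of_monotone hu hb k
  have hx5 : 1 ≤ x ^ 5 / C' := by rw [le_div_iff₀ hC'0]; nlinarith [one_le_pow₀ (n := 5) hx]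
  have hkx5 : k * (x ^ 4 / C') ≤ x ^ 5 / C' := calc
    k * (x ^ 4 / C') ≤ x * (x ^ 4 / C') := by gcongr
    _ = x ^ 5 / C' := by ring
  have : 2 * (b₀ + 1) * x ^ 5 / C' = (b₀ + 1) * (x ^ 5 / C') + (b₀ + 1) * (x ^ 5 / C') := by ring
  nlinarith

lemma pow_mul_exp_neg_le_of_large {C' b₀ τ L : ℝ} {D₂ γ₀ : ℕ} {b : ℕ → ℝ} (hC'0 : 0 < C')
    (hC' : C' ≤ 1) (hb₀ : 0 ≤ b₀) (hτ : 0 ≤ τ) (hL1 : 1 ≤ L) (hLC' : -2 * log C' ≤ L)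
    (hL : 2 * (D₂ * γ₀) * (log (2 * (b₀ + 1)) - 2 * log C' + (4 * τ + 7) * (6 + log L)) ≤ L)
    (hb0 : b 0 = b₀) (hb : ∀ k, b (k + 1) = b k + ((5 / 2) ^ k * L) ^ 4 / C') (k : ℕ) :
    ((b k + 1) / (C' / ((5 / 2) ^ k * L) ^ (4 * τ) * (1 / ((5 / 2) ^ k * L) ^ 2))) ^
      (D₂ * (2 ^ k * γ₀)) * exp (-((5 / 2) ^ k * L)) ≤ C' := by
  set x := (5 / 2 : ℝ) ^ k * L
  set a := log (2 * (b₀ + 1)) - 2 * log C'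
  have hLx : L ≤ x := le_mul_of_one_le_left (by linarith) (one_le_pow₀ (by norm_num))
  have hb₀b : b₀ ≤ b k := hb0 ▸ monotone_nat_of_le_succ
    (fun j => by rw [hb j]; linarith [show 0 ≤ ((5 / 2 : ℝ) ^ j * L) ^ 4 / C' by positivity])
    (Nat.zero_le k)
  have hlogM : log ((b k + 1) / (C' / x ^ (4 * τ) * (1 / x ^ 2))) ≤ a + (4 * τ + 7) * log x :=
    log_div_rpow_le hC'0 (by positivity) (by linarith) (by linarith)
      (add_one_le_of_eq_add_geom hC'0 hC' hb₀ hL1 hb0 hb k)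
  have ha : 0 ≤ a := by
    linarith [log_nonneg (show 1 ≤ 2 * (b₀ + 1) by linarith), log_nonpos hC'0.le hC']
  have hgrowth : 2 * (D₂ * γ₀) * 2 ^ k * (a + (4 * τ + 7) * log x) ≤ x :=
    two_pow_mul_add_mul_log_le (by positivity) ha (by linarith) hL1 hL k
  refine pow_mul_exp_neg_le (div_pos (by linarith) (by positivity)) hC'0 ?_
  push_cast
  nlinarith [mul_le_mul_of_nonneg_left hlogM (show (0 : ℝ) ≤ D₂ * (2 ^ k * γ₀) by positivity)]

/-- numerical lemma: with `ε_k = ε₀^{(5/2)^k}`, `γ_k = 2^kγ₀`,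
`r_{k+1} = 1/|log ε_k|²`, `b_{k+1} = b_k + |log ε_k|⁴/C'`, `κ_k = C'/|log ε_k|^{4τ}`,
if `ε₀ ≤ C(1/(b₀+1))^{16γ₀D₂}` (with `C` depending only on `C', D₂, γ₀, τ`), then for all `k`:
`4/r_k ≤ |log ε_k|²` (for `k ≥ 1`) and `((b_k+1)/(κ_k r_{k+1}))^{D₂γ_k} ε_k ≤ C'`. -/
theorem stmt_11 (C' b₀ τ : ℝ) (hC'0 : 0 < C') (hC' : C' ≤ 1) (hb₀ : 0 < b₀) (hτ : 1 ≤ τ)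
    (D₂ γ₀ : ℕ) :
    ∃ C : ℝ, 0 < C ∧
    ∀ ε₀ : ℝ, 0 < ε₀ → ε₀ ≤ C * (1 / (b₀ + 1)) ^ (16 * γ₀ * D₂) →
    ∀ ε : ℕ → ℝ, (∀ k, ε k = ε₀ ^ ((5 / 2 : ℝ) ^ k)) →
    ∀ γ : ℕ → ℕ, (∀ k, γ k = 2 ^ k * γ₀) →
    ∀ rr : ℕ → ℝ, (∀ k, rr (k + 1) = 1 / |Real.log (ε k)| ^ 2) →
    ∀ b : ℕ → ℝ, b 0 = b₀ → (∀ k, b (k + 1) = b k + |Real.log (ε k)| ^ 4 / C') →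
    ∀ κs : ℕ → ℝ, (∀ k, κs k = C' / |Real.log (ε k)| ^ (4 * τ)) →
      (∀ k : ℕ, 1 ≤ k → 4 / rr k ≤ |Real.log (ε k)| ^ 2) ∧
      (∀ k : ℕ, ((b k + 1) / (κs k * rr (k + 1))) ^ (D₂ * γ k) * ε k ≤ C') := by
  set A : ℝ := 2 * (D₂ * γ₀)
  set a := log (2 * (b₀ + 1)) - 2 * log C'
  set q := 4 * τ + 7
  obtain ⟨L₀, hL₀⟩ := eventually_atTop.1 <| (eventually_ge_atTop 1).and <|
    (eventually_ge_atTop (-2 * log C')).and (eventually_add_mul_log_le (A * (a + 6 * q)) (A * q))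
  refine ⟨exp (-L₀) * (b₀ + 1) ^ (16 * γ₀ * D₂), by positivity, ?_⟩
  intro ε₀ hε₀ hε₀C ε hε γ hγ rr hrr b hb0 hb κs hκs
  set L := -log ε₀
  have hL₀L : L₀ ≤ L := by
    rw [mul_assoc, ← mul_pow, mul_one_div_cancel (by positivity), one_pow, mul_one] at hε₀C
    linarith [log_exp (-L₀) ▸ log_le_log hε₀ hε₀C]
  obtain ⟨hL1, hLC', hLlog⟩ := hL₀ L hL₀L
  have hεL : ∀ k, ε k = exp (-((5 / 2) ^ k * L)) := by
    intro k; rw [hε k, rpow_def_of_pos hε₀]; congr 1; simp only [L]; ring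
  have habs : ∀ k, |log (ε k)| = (5 / 2) ^ k * L := by
    intro k; rw [hεL, log_exp, abs_neg, abs_of_pos (by positivity)]
  refine ⟨fun k hk => ?_, fun k => ?_⟩
  · obtain ⟨j, rfl⟩ := Nat.exists_eq_add_of_le' hk
    rw [hrr, habs, habs, one_div, div_inv_eq_mul, pow_succ (5 / 2 : ℝ) j]
    nlinarith [show 0 ≤ (5 / 2 : ℝ) ^ j * L by positivity]
  · rw [hκs, hrr, habs, hεL, hγ]
    exact pow_mul_exp_neg_le_of_large hC'0 hC' hb₀.le (by linarith) hL1 hLC' (by linarith) hb0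
      (fun j => by rw [hb, habs]) k
end
end
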